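/- arXiv:1606.05097 — 10 statements merged into one kernel-verified Lean document; each statement's English description precedes it below -/
import Mathlib

section
/- Let (X,Y) be a BLM pair with parameter θ > 0. Then for all s, t > 0, the joint Laplace–Stieltjes transform satisfies E[exp(−sX−tY)] = ( (θ+s)·E[exp(−sX)] + (θ+t)·E[exp(−tY)] − θ ) / (θ+s+t). -/
open MeasureTheory Real Set

/-- Marginal survival function `x ↦ P(X > x)`. -/
def survival {Ω : Type*} [MeasurableSpace Ω] (μ : Measure Ω) (X : Ω → ℝ) (x : ℝ) : ℝ :=
  (μ {ω | x < X ω}).toReal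

/-- Joint survival function `(x,y) ↦ P(X > x, Y > y)`. -/
def jointSurvival {Ω : Type*} [MeasurableSpace Ω] (μ : Measure Ω) (X Y : Ω → ℝ) (x y : ℝ) : ℝ :=
  (μ {ω | x < X ω ∧ y < Y ω}).toReal

/-- `(X,Y)` is a BLM pair with parameter `θ > 0`. -/
def IsBLM {Ω : Type*} [MeasurableSpace Ω] (μ : Measure Ω) (X Y : Ω → ℝ) (θ : ℝ) : Prop :=
  0 < θ ∧ μ {ω | 0 < X ω} = 1 ∧ μ {ω | 0 < Y ω} = 1 ∧
  (∀ x y : ℝ, 0 ≤ y → y ≤ x →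
    jointSurvival μ X Y x y = Real.exp (-θ * y) * survival μ X (x - y)) ∧
  (∀ x y : ℝ, 0 ≤ x → x ≤ y →
    jointSurvival μ X Y x y = Real.exp (-θ * x) * survival μ Y (y - x))

/-!
For `Z ≥ 0` one has `1 - e^{-cZ} = c ∫₀^∞ e^{-cy} 1{y < Z} dy`, so Fubini turns Laplace transforms
into integrals of survival functions: `1 - E e^{-sX} = s ∫ e^{-sx} F̄(x) dx` and
`E[(1 - e^{-sX})(1 - e^{-tY})] = st ∫∫ e^{-sx-ty} H̄(x,y) dx dy`. Split the quadrant along the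
diagonal and insert the BLM form of `H̄`; after the shift `x ↦ x - y` below the diagonal (and
`y ↦ y - x` above it) each half factors as `∫₀^∞ e^{-(s+t+θ)y} dy = 1/(s+t+θ)` times a marginal
transform. Hence `E[(1 - e^{-sX})(1 - e^{-tY})] = (t (1 - E e^{-sX}) + s (1 - E e^{-tY}))/(θ+s+t)`,
and expanding the left-hand side gives the formula.
-/

open Filter Function

lemma integral_exp_neg_mul_Ioi_zero {c : ℝ} (hc : 0 < c) :
    ∫ x in Ioi (0 : ℝ), exp (-c * x) = 1 / c := by
  rw [integral_exp_mul_Ioi (neg_neg_iff_pos.2 hc)]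
  simp

lemma integral_Ioo_mul_exp_neg_mul {c z : ℝ} (hc : 0 < c) (hz : 0 ≤ z) :
    ∫ y in Ioo 0 z, c * exp (-c * y) = 1 - exp (-c * z) := by
  rw [← integral_Ioc_eq_integral_Ioo, ← intervalIntegral.integral_of_le hz,
    intervalIntegral.integral_const_mul,
    ← intervalIntegral.integral_Ioi_sub_Ioi (exp_neg_integrableOn_Ioi 0 hc) hz,
    integral_exp_mul_Ioi (neg_neg_iff_pos.2 hc), integral_exp_mul_Ioi (neg_neg_iff_pos.2 hc)]
  field_simp
  simp

lemma integral_Ioi_comp_sub_right (f : ℝ → ℝ) (a : ℝ) :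
    ∫ x in Ioi a, f (x - a) = ∫ u in Ioi 0, f u := by
  simpa using (measurePreserving_sub_right volume a).setIntegral_preimage_emb
    (measurableEmbedding_subRight a) f (Ioi 0)

lemma integral_Ioi_exp_neg_mul_mul_comp_sub_right (c a : ℝ) (F : ℝ → ℝ) :
    ∫ x in Ioi a, exp (-c * x) * F (x - a)
      = exp (-c * a) * ∫ u in Ioi 0, exp (-c * u) * F u := by
  rw [← integral_const_mul, ← integral_Ioi_comp_sub_right _ a]
  refine setIntegral_congr_fun measurableSet_Ioi fun x _ => ?_
  rw [← mul_assoc, ← exp_add]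
  ring_nf

lemma integrable_prod_of_norm_le_exp_neg_mul {K : ℝ × ℝ → ℝ} (hK : Measurable K)
    {s t C : ℝ} (hs : 0 < s) (ht : 0 < t)
    (hKC : ∀ x y, 0 < x → 0 < y → ‖K (x, y)‖ ≤ C * (exp (-s * x) * exp (-t * y))) :
    Integrable K ((volume.restrict (Ioi 0)).prod (volume.restrict (Ioi 0))) := by
  refine (((exp_neg_integrableOn_Ioi 0 hs).mul_prod
    (exp_neg_integrableOn_Ioi 0 ht)).const_mul C).mono' hK.aestronglyMeasurable ?_
  rw [Measure.prod_restrict]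
  filter_upwards [ae_restrict_mem (measurableSet_Ioi.prod measurableSet_Ioi)] with p hp
  exact hKC p.1 p.2 hp.1 hp.2

lemma norm_exp_neg_mul_mul_le {s t θ x y v C : ℝ} (hθ : 0 ≤ θ) (hy : 0 ≤ y)
    (hv : |v| ≤ C) :
    ‖exp (-(t + θ) * y) * (exp (-s * x) * v)‖ ≤ C * (exp (-s * x) * exp (-t * y)) := by
  rw [Real.norm_eq_abs, abs_mul, abs_mul, abs_of_pos (exp_pos _), abs_of_pos (exp_pos _)]
  calc exp (-(t + θ) * y) * (exp (-s * x) * |v|) ≤ exp (-t * y) * (exp (-s * x) * C) := by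
        gcongr
        nlinarith
    _ = C * (exp (-s * x) * exp (-t * y)) := by ring

lemma integral_indicator_lt_eq_integral_Ioi_integral_Ioi {f : ℝ → ℝ → ℝ}
    (hf : Integrable ({p : ℝ × ℝ | p.2 < p.1}.indicator fun p => f p.1 p.2)
      ((volume.restrict (Ioi 0)).prod (volume.restrict (Ioi 0)))) :
    ∫ p, {p : ℝ × ℝ | p.2 < p.1}.indicator (fun p => f p.1 p.2) p
        ∂(volume.restrict (Ioi 0)).prod (volume.restrict (Ioi 0))
      = ∫ y in Ioi 0, ∫ x in Ioi y, f x y := by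
  rw [integral_prod_symm _ hf]
  refine setIntegral_congr_fun measurableSet_Ioi fun y (hy : 0 < y) => ?_
  rw [← inter_eq_right.2 (Ioi_subset_Ioi hy.le), ← setIntegral_indicator measurableSet_Ioi]
  rfl

lemma integral_indicator_le_eq_integral_Ioi_integral_Ioi {f : ℝ → ℝ → ℝ}
    (hf : Integrable ({p : ℝ × ℝ | p.1 ≤ p.2}.indicator fun p => f p.1 p.2)
      ((volume.restrict (Ioi 0)).prod (volume.restrict (Ioi 0)))) :
    ∫ p, {p : ℝ × ℝ | p.1 ≤ p.2}.indicator (fun p => f p.1 p.2) p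
        ∂(volume.restrict (Ioi 0)).prod (volume.restrict (Ioi 0))
      = ∫ x in Ioi 0, ∫ y in Ioi x, f x y := by
  rw [integral_prod _ hf]
  refine setIntegral_congr_fun measurableSet_Ioi fun x (hx : 0 < x) => ?_
  rw [← integral_Ici_eq_integral_Ioi (x := x), ← inter_eq_right.2 (Ici_subset_Ioi.2 hx),
    ← setIntegral_indicator measurableSet_Ici]
  rfl

lemma integral_Ioi_integral_Ioi_exp_neg_mul_comp_sub (F : ℝ → ℝ) {s t θ : ℝ}
    (hstθ : 0 < s + t + θ) :
    ∫ y in Ioi 0, ∫ x in Ioi y, exp (-(t + θ) * y) * (exp (-s * x) * F (x - y))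
      = (∫ u in Ioi 0, exp (-s * u) * F u) / (s + t + θ) := by
  simp_rw [integral_const_mul, integral_Ioi_exp_neg_mul_mul_comp_sub_right, ← mul_assoc,
    ← exp_add, ← add_mul]
  rw [integral_mul_const, show -(t + θ) + -s = -(s + t + θ) by ring,
    integral_exp_neg_mul_Ioi_zero hstθ]
  ring

lemma integral_Ioi_integral_Ioi_exp_neg_mul_of_blm
    {H : ℝ → ℝ → ℝ} {F G : ℝ → ℝ} (hF : Measurable F) (hG : Measurable G) {C : ℝ}
    (hFC : ∀ u, |F u| ≤ C) (hGC : ∀ u, |G u| ≤ C) {θ s t : ℝ} (hθ : 0 ≤ θ)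
    (hs : 0 < s) (ht : 0 < t)
    (hH₁ : ∀ x y, 0 ≤ y → y ≤ x → H x y = exp (-θ * y) * F (x - y))
    (hH₂ : ∀ x y, 0 ≤ x → x ≤ y → H x y = exp (-θ * x) * G (y - x)) :
    ∫ y in Ioi 0, exp (-t * y) * ∫ x in Ioi 0, exp (-s * x) * H x y
      = ((∫ u in Ioi 0, exp (-s * u) * F u) + ∫ u in Ioi 0, exp (-t * u) * G u)
        / (s + t + θ) := by
  set K₁ : ℝ × ℝ → ℝ := {p | p.2 < p.1}.indicator fun p =>
    exp (-(t + θ) * p.2) * (exp (-s * p.1) * F (p.1 - p.2))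
  set K₂ : ℝ × ℝ → ℝ := {p | p.1 ≤ p.2}.indicator fun p =>
    exp (-(s + θ) * p.1) * (exp (-t * p.2) * G (p.2 - p.1))
  have hK₁ : Integrable K₁ ((volume.restrict (Ioi 0)).prod (volume.restrict (Ioi 0))) :=
    integrable_prod_of_norm_le_exp_neg_mul
      ((by fun_prop : Measurable fun p : ℝ × ℝ => _).indicator
        (measurableSet_lt measurable_snd measurable_fst)) hs ht fun x y _ hy =>
        (norm_indicator_le_norm_self _ _).trans (norm_exp_neg_mul_mul_le hθ hy.le (hFC _))
  have hK₂ : Integrable K₂ ((volume.restrict (Ioi 0)).prod (volume.restrict (Ioi 0))) :=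
    integrable_prod_of_norm_le_exp_neg_mul
      ((by fun_prop : Measurable fun p : ℝ × ℝ => _).indicator
        (measurableSet_le measurable_fst measurable_snd)) hs ht fun x y hx _ =>
        (norm_indicator_le_norm_self _ _).trans
          ((norm_exp_neg_mul_mul_le hθ hx.le (hGC _)).trans_eq (by ring))
  have hsplit : ∀ y ∈ Ioi (0 : ℝ), exp (-t * y) * ∫ x in Ioi 0, exp (-s * x) * H x y
      = ∫ x in Ioi 0, K₁ (x, y) + K₂ (x, y) := fun y hy => by
    rw [← integral_const_mul]
    refine setIntegral_congr_fun measurableSet_Ioi fun x hx => ?_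
    rcases lt_or_ge y x with hxy | hxy
    · simp only [K₁, K₂, indicator_apply, mem_ofPred_eq, hxy, not_le.2 hxy, if_true, if_false,
        add_zero, hH₁ x y (le_of_lt hy) hxy.le]
      rw [neg_add, add_mul, exp_add]
      ring
    · simp only [K₁, K₂, indicator_apply, mem_ofPred_eq, hxy, not_lt.2 hxy, if_true, if_false,
        zero_add, hH₂ x y (le_of_lt hx) hxy]
      rw [neg_add, add_mul, exp_add]
      ring
  rw [setIntegral_congr_fun measurableSet_Ioi hsplit,
    ← integral_prod_symm (fun p => K₁ p + K₂ p) (hK₁.add hK₂), integral_add hK₁ hK₂,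
    integral_indicator_lt_eq_integral_Ioi_integral_Ioi
      (f := fun x y => exp (-(t + θ) * y) * (exp (-s * x) * F (x - y))) hK₁,
    integral_indicator_le_eq_integral_Ioi_integral_Ioi
      (f := fun x y => exp (-(s + θ) * x) * (exp (-t * y) * G (y - x))) hK₂, add_div,
    integral_Ioi_integral_Ioi_exp_neg_mul_comp_sub F (by positivity),
    integral_Ioi_integral_Ioi_exp_neg_mul_comp_sub G (by linarith : 0 < t + s + θ), add_comm t s]

section

variable {Ω : Type*} [MeasurableSpace Ω] {μ : Measure Ω}

lemma integral_mul_one_sub_exp_neg_mul [SFinite μ] {g Z : Ω → ℝ} (hg : Integrable g μ)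
    (hZ : Measurable Z) (hZ0 : 0 ≤ᵐ[μ] Z) {c : ℝ} (hc : 0 < c) :
    ∫ ω, g ω * (1 - exp (-c * Z ω)) ∂μ
      = c * ∫ y in Ioi 0, exp (-c * y) * ∫ ω in {ω | y < Z ω}, g ω ∂μ := by
  set ν := volume.restrict (Ioi (0 : ℝ))
  set f : Ω → ℝ → ℝ := fun ω y =>
    g ω * (Iio (Z ω)).indicator (fun y => c * exp (-c * y)) y
  have hf : Integrable (uncurry f) (μ.prod ν) := by
    have hm : Measurable fun p : Ω × ℝ =>
        {p : Ω × ℝ | p.2 < Z p.1}.indicator (fun p => c * exp (-c * p.2)) p :=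
      (by fun_prop : Measurable fun p : Ω × ℝ => c * exp (-c * p.2)).indicator
        (measurableSet_lt measurable_snd (hZ.comp measurable_fst))
    refine (hg.norm.mul_prod ((exp_neg_integrableOn_Ioi 0 hc).const_mul c)).mono'
      (hg.aestronglyMeasurable.comp_fst.mul hm.aestronglyMeasurable) (ae_of_all _ fun p => ?_)
    change ‖g p.1 * _‖ ≤ _
    rw [norm_mul]
    exact mul_le_mul_of_nonneg_left (norm_indicator_le_norm_self _ _ |>.trans
      (by rw [Real.norm_of_nonneg (by positivity)])) (norm_nonneg _)
  calc ∫ ω, g ω * (1 - exp (-c * Z ω)) ∂μ = ∫ ω, ∫ y, f ω y ∂ν ∂μ := by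
        refine integral_congr_ae (hZ0.mono fun ω hω => ?_)
        change _ = ∫ y in Ioi 0, g ω * _
        rw [integral_const_mul, setIntegral_indicator measurableSet_Iio, Ioi_inter_Iio,
          integral_Ioo_mul_exp_neg_mul hc hω]
    _ = ∫ y, ∫ ω, f ω y ∂μ ∂ν := integral_integral_swap hf
    _ = ∫ y in Ioi 0, c * (exp (-c * y) * ∫ ω in {ω | y < Z ω}, g ω ∂μ) := by
        refine integral_congr_ae (ae_of_all _ fun y => ?_)
        have : ∀ ω, f ω y = {ω | y < Z ω}.indicator g ω * (c * exp (-c * y)) := fun ω => by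
          by_cases h : y < Z ω <;> simp [f, indicator_apply, h]
        simp_rw [this]
        rw [integral_mul_const, integral_indicator (measurableSet_lt measurable_const hZ)]
        ring
    _ = _ := integral_const_mul _ _

lemma integrable_exp_of_ae_nonpos [IsFiniteMeasure μ] {f : Ω → ℝ} (hf : Measurable f)
    (h : ∀ᵐ ω ∂μ, f ω ≤ 0) : Integrable (fun ω => exp (f ω)) μ :=
  .of_bound (by fun_prop) 1 <| h.mono fun ω hω => by
    rwa [Real.norm_of_nonneg (exp_nonneg _), exp_le_one_iff]

lemma integrable_exp_neg_mul [IsFiniteMeasure μ] {Z : Ω → ℝ} (hZ : Measurable Z)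
    (hZ0 : 0 ≤ᵐ[μ] Z) {c : ℝ} (hc : 0 ≤ c) : Integrable (fun ω => exp (-c * Z ω)) μ :=
  integrable_exp_of_ae_nonpos (by fun_prop) (hZ0.mono fun ω (hω : 0 ≤ Z ω) => by nlinarith)

lemma integral_exp_neg_mul_eq_one_sub [IsProbabilityMeasure μ] {Z : Ω → ℝ} (hZ : Measurable Z)
    (hZ0 : 0 ≤ᵐ[μ] Z) {c : ℝ} (hc : 0 < c) :
    ∫ ω, exp (-c * Z ω) ∂μ = 1 - c * ∫ x in Ioi 0, exp (-c * x) * survival μ Z x := by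
  have h := integral_mul_one_sub_exp_neg_mul (integrable_const (1 : ℝ)) hZ hZ0 hc
  have hint := integrable_exp_neg_mul hZ hZ0 hc.le
  simp only [one_mul, setIntegral_const, smul_eq_mul, mul_one] at h
  rw [integral_sub (integrable_const 1) hint, integral_const, probReal_univ, smul_eq_mul,
    mul_one] at h
  unfold survival
  simp only [measureReal_def] at h
  linarith

lemma integral_one_sub_mul_one_sub [IsProbabilityMeasure μ] {f g : Ω → ℝ}
    (hf : Integrable f μ) (hg : Integrable g μ) (hfg : Integrable (fun ω => f ω * g ω) μ) :
    ∫ ω, (1 - f ω) * (1 - g ω) ∂μ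
      = 1 - ∫ ω, f ω ∂μ - ∫ ω, g ω ∂μ + ∫ ω, f ω * g ω ∂μ := by
  have h1 : Integrable (fun ω => 1 - f ω) μ := (integrable_const 1).sub hf
  have h2 : Integrable (fun ω => 1 - f ω - g ω) μ := h1.sub hg
  simp only [one_sub_mul, mul_one_sub, ← sub_add]
  rw [integral_add h2 hfg, integral_sub h1 hg, integral_sub (integrable_const 1) hf]
  simp

lemma integral_exp_neg_mul_sub_mul_eq [IsProbabilityMeasure μ] {X Y : Ω → ℝ}
    (hX : Measurable X) (hY : Measurable Y) (hX0 : 0 ≤ᵐ[μ] X) (hY0 : 0 ≤ᵐ[μ] Y)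
    {s t : ℝ} (hs : 0 < s) (ht : 0 < t) :
    ∫ ω, exp (-s * X ω - t * Y ω) ∂μ
      = ∫ ω, exp (-s * X ω) ∂μ + ∫ ω, exp (-t * Y ω) ∂μ - 1
        + s * t * ∫ y in Ioi 0, exp (-t * y) *
            ∫ x in Ioi 0, exp (-s * x) * jointSurvival μ X Y x y := by
  have hXint := integrable_exp_neg_mul hX hX0 hs.le
  have hprod :
      (fun ω => exp (-s * X ω) * exp (-t * Y ω)) = fun ω => exp (-s * X ω - t * Y ω) :=
    funext fun ω => by rw [← exp_add, sub_eq_add_neg, neg_mul t]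
  have hXYint : Integrable (fun ω => exp (-s * X ω) * exp (-t * Y ω)) μ :=
    hprod ▸ integrable_exp_of_ae_nonpos (by fun_prop)
      (hX0.mp (hY0.mono fun ω (hY : 0 ≤ Y ω) (hX : 0 ≤ X ω) => by nlinarith))
  have inner : ∀ y, ∫ ω in {ω | y < Y ω}, (1 - exp (-s * X ω)) ∂μ
      = s * ∫ x in Ioi 0, exp (-s * x) * jointSurvival μ X Y x y := fun y => by
    simpa [Measure.restrict_restrict (measurableSet_lt measurable_const hX), measureReal_def,
      jointSurvival, ofPred_and] using
      integral_mul_one_sub_exp_neg_mul (μ := μ.restrict {ω | y < Y ω}) (integrable_const 1) hX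
        (ae_restrict_of_ae hX0) hs
  have outer := integral_mul_one_sub_exp_neg_mul (g := fun ω => 1 - exp (-s * X ω))
    ((integrable_const 1).sub hXint) hY hY0 ht
  simp only [inner, mul_left_comm _ s, integral_const_mul] at outer
  rw [integral_one_sub_mul_one_sub hXint (integrable_exp_neg_mul hY hY0 ht.le) hXYint,
    hprod] at outer
  linear_combination outer

lemma ae_nonneg_of_measure_setOf_pos_eq_one [IsProbabilityMeasure μ] {Z : Ω → ℝ}
    (hZ : Measurable Z) (h : μ {ω | 0 < Z ω} = 1) : 0 ≤ᵐ[μ] Z :=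
  ((ae_iff_measure_eq (p := fun ω => 0 < Z ω)
    (measurableSet_lt measurable_const hZ).nullMeasurableSet).2
    (by rw [h, measure_univ])).mono fun _ hω => hω.le

lemma survival_antitone [IsFiniteMeasure μ] (Z : Ω → ℝ) : Antitone (survival μ Z) :=
  fun _ _ hab => ENNReal.toReal_mono (measure_ne_top μ _) (measure_mono fun _ h => hab.trans_lt h)

lemma abs_survival_le_one [IsProbabilityMeasure μ] (Z : Ω → ℝ) (x : ℝ) :
    |survival μ Z x| ≤ 1 := by
  rw [survival, abs_of_nonneg ENNReal.toReal_nonneg]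
  exact measureReal_le_one

end

theorem blm_laplace_stieltjes {Ω : Type*} [MeasurableSpace Ω] (μ : Measure Ω)
    [IsProbabilityMeasure μ] (X Y : Ω → ℝ) (hX : Measurable X) (hY : Measurable Y)
    (θ : ℝ) (hBLM : IsBLM μ X Y θ) (s t : ℝ) (hs : 0 < s) (ht : 0 < t) :
    ∫ ω, Real.exp (-s * X ω - t * Y ω) ∂μ =
      ((θ + s) * ∫ ω, Real.exp (-s * X ω) ∂μ
        + (θ + t) * ∫ ω, Real.exp (-t * Y ω) ∂μ - θ) / (θ + s + t) := by
  obtain ⟨hθ, hXpos, hYpos, hH₁, hH₂⟩ := hBLM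
  have hX0 := ae_nonneg_of_measure_setOf_pos_eq_one hX hXpos
  have hY0 := ae_nonneg_of_measure_setOf_pos_eq_one hY hYpos
  rw [integral_exp_neg_mul_sub_mul_eq hX hY hX0 hY0 hs ht,
    integral_Ioi_integral_Ioi_exp_neg_mul_of_blm (survival_antitone X).measurable
      (survival_antitone Y).measurable (abs_survival_le_one X) (abs_survival_le_one Y) hθ.le hs ht
      hH₁ hH₂,
    integral_exp_neg_mul_eq_one_sub hX hX0 hs, integral_exp_neg_mul_eq_one_sub hY hY0 ht]
  field_simp
  ring
end

section
/- Let (X,Y) be a pair of nonnegative random variables on a probability space with joint survival function H̄(x,y)=P(X>x, Y>y), and let r, s > 0 be real numbers such that E[X^r·Y^s], E[X^r] and E[Y^s] are finite. Then E[X^r·Y^s] = r·s·∫₀^∞∫₀^∞ H̄(x,y)·x^{r−1}·y^{s−1} dx dy. -/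
/-!
The layer-cake formula `∫ f ^ p dν = p ∫₀^∞ t ^ (p - 1) ν{f > t} dt`, applied twice: first to `X`
under the measure `Y ^ s • μ`, which gives `r ∫₀^∞ x ^ (r - 1) E[Y ^ s; X > x] dx`, then to `Y`
under `μ` restricted to `{X > x}`. Done with lower Lebesgue integrals, this needs no finiteness;
finiteness of `E[X ^ r Y ^ s]` then makes the iterated integral finite, so that it can be read
as an iterated Bochner integral.
-/

open MeasureTheory Real Set
open scoped ENNReal

theorem integral_integral_eq_toReal_lintegral_lintegral {α β : Type*} [MeasurableSpace α]
    [MeasurableSpace β] {μ : Measure α} {ν : Measure β} [SFinite ν] {f : α → β → ℝ}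
    (hf : Measurable (Function.uncurry f)) (hf0 : ∀ᵐ x ∂μ, ∀ᵐ y ∂ν, 0 ≤ f x y)
    (hfin : ∫⁻ x, ∫⁻ y, ENNReal.ofReal (f x y) ∂ν ∂μ ≠ ⊤) :
    ∫ x, ∫ y, f x y ∂ν ∂μ = (∫⁻ x, ∫⁻ y, ENNReal.ofReal (f x y) ∂ν ∂μ).toReal := by
  have hF : Measurable fun x => ∫⁻ y, ENNReal.ofReal (f x y) ∂ν :=
    (ENNReal.measurable_ofReal.comp hf).lintegral_prod_right'
  rw [← integral_toReal hF.aemeasurable (ae_lt_top hF hfin)]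
  refine integral_congr_ae ?_
  filter_upwards [hf0] with x hx
  exact integral_eq_lintegral_of_nonneg_ae hx (hf.comp measurable_prodMk_left).aestronglyMeasurable

section

variable {Ω : Type*} [MeasurableSpace Ω] (μ : Measure Ω) {X Y : Ω → ℝ}

theorem lintegral_rpow_mul_rpow_eq_lintegral_meas_lt (hX0 : 0 ≤ᵐ[μ] X) (hY0 : 0 ≤ᵐ[μ] Y)
    (hX : Measurable X) (hY : Measurable Y) {r s : ℝ} (hr : 0 < r) (hs : 0 < s) :
    ∫⁻ ω, ENNReal.ofReal (X ω ^ r * Y ω ^ s) ∂μ =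
      ENNReal.ofReal (r * s) * ∫⁻ x in Ioi 0, ∫⁻ y in Ioi 0,
        μ {ω | x < X ω ∧ y < Y ω} * ENNReal.ofReal (x ^ (r - 1)) *
          ENNReal.ofReal (y ^ (s - 1)) := by
  set ρ : Ω → ℝ≥0∞ := fun ω => ENNReal.ofReal (Y ω ^ s)
  have hρ : Measurable ρ := by fun_prop
  have h_density : ∀ x : ℝ, μ.withDensity ρ {ω | x < X ω} = ENNReal.ofReal s *
      ∫⁻ y in Ioi 0, μ {ω | x < X ω ∧ y < Y ω} * ENNReal.ofReal (y ^ (s - 1)) := by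
    intro x
    rw [withDensity_apply _ (measurableSet_lt measurable_const hX),
      lintegral_rpow_eq_lintegral_meas_lt_mul _ (ae_restrict_of_ae hY0) hY.aemeasurable hs]
    congr 2 with y
    rw [Measure.restrict_apply (measurableSet_lt measurable_const hY), inter_comm]
    rfl
  calc ∫⁻ ω, ENNReal.ofReal (X ω ^ r * Y ω ^ s) ∂μ
      = ∫⁻ ω, (ρ * fun ω => ENNReal.ofReal (X ω ^ r)) ω ∂μ := by
        refine lintegral_congr_ae ?_
        filter_upwards [hX0] with ω hω
        rw [Pi.mul_apply, ENNReal.ofReal_mul (rpow_nonneg hω r), mul_comm]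
    _ = ∫⁻ ω, ENNReal.ofReal (X ω ^ r) ∂μ.withDensity ρ :=
        (lintegral_withDensity_eq_lintegral_mul _ hρ (by fun_prop)).symm
    _ = ENNReal.ofReal r *
          ∫⁻ x in Ioi 0, μ.withDensity ρ {ω | x < X ω} * ENNReal.ofReal (x ^ (r - 1)) :=
        lintegral_rpow_eq_lintegral_meas_lt_mul _ (withDensity_absolutelyContinuous μ ρ hX0)
          hX.aemeasurable hr
    _ = _ := by
        simp_rw [h_density]
        rw [ENNReal.ofReal_mul hr.le, mul_assoc,
          ← lintegral_const_mul' (ENNReal.ofReal s) _ ENNReal.ofReal_ne_top]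
        refine congrArg _ (lintegral_congr fun x => ?_)
        rw [mul_assoc, ← lintegral_mul_const' _ _ ENNReal.ofReal_ne_top]
        simp only [mul_right_comm _ (ENNReal.ofReal (x ^ (r - 1)))]

theorem measurable_jointSurvival [SFinite μ] (hX : Measurable X) (hY : Measurable Y) :
    Measurable (Function.uncurry (jointSurvival μ X Y)) := by
  have hS : MeasurableSet {q : (ℝ × ℝ) × Ω | q.1.1 < X q.2 ∧ q.1.2 < Y q.2} :=
    (measurableSet_lt (measurable_fst.comp measurable_fst) (hX.comp measurable_snd)).inter
      (measurableSet_lt (measurable_snd.comp measurable_fst) (hY.comp measurable_snd))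
  exact (measurable_measure_prodMk_left hS).ennreal_toReal

theorem setLIntegral_ofReal_jointSurvival_mul_rpow [IsFiniteMeasure μ] (r s : ℝ) :
    ∫⁻ x in Ioi 0, ∫⁻ y in Ioi 0,
      ENNReal.ofReal (jointSurvival μ X Y x y * x ^ (r - 1) * y ^ (s - 1)) =
    ∫⁻ x in Ioi 0, ∫⁻ y in Ioi 0,
      μ {ω | x < X ω ∧ y < Y ω} * ENNReal.ofReal (x ^ (r - 1)) * ENNReal.ofReal (y ^ (s - 1)) := by
  refine setLIntegral_congr_fun measurableSet_Ioi fun x hx =>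
    setLIntegral_congr_fun measurableSet_Ioi fun y _ => ?_
  have hH : 0 ≤ jointSurvival μ X Y x y := ENNReal.toReal_nonneg
  have hx : 0 ≤ x ^ (r - 1) := rpow_nonneg (le_of_lt hx) _
  rw [ENNReal.ofReal_mul (mul_nonneg hH hx), ENNReal.ofReal_mul hH, jointSurvival,
    ENNReal.ofReal_toReal (measure_ne_top μ _)]

theorem integral_jointSurvival_mul_rpow [IsFiniteMeasure μ] (hX : Measurable X)
    (hY : Measurable Y) {r s : ℝ}
    (hfin : ∫⁻ x in Ioi 0, ∫⁻ y in Ioi 0, μ {ω | x < X ω ∧ y < Y ω} *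
      ENNReal.ofReal (x ^ (r - 1)) * ENNReal.ofReal (y ^ (s - 1)) ≠ ⊤) :
    ∫ x in Ioi 0, ∫ y in Ioi 0, jointSurvival μ X Y x y * x ^ (r - 1) * y ^ (s - 1) =
      (∫⁻ x in Ioi 0, ∫⁻ y in Ioi 0, μ {ω | x < X ω ∧ y < Y ω} *
        ENNReal.ofReal (x ^ (r - 1)) * ENNReal.ofReal (y ^ (s - 1))).toReal := by
  have h_meas : Measurable fun p : ℝ × ℝ =>
      jointSurvival μ X Y p.1 p.2 * p.1 ^ (r - 1) * p.2 ^ (s - 1) := by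
    have := measurable_jointSurvival μ hX hY
    fun_prop
  have h_nonneg : ∀ᵐ x ∂volume.restrict (Ioi (0:ℝ)), ∀ᵐ y ∂volume.restrict (Ioi (0:ℝ)),
      0 ≤ jointSurvival μ X Y x y * x ^ (r - 1) * y ^ (s - 1) := by
    filter_upwards [ae_restrict_mem measurableSet_Ioi] with x hx
    filter_upwards [ae_restrict_mem measurableSet_Ioi] with y hy
    exact mul_nonneg (mul_nonneg ENNReal.toReal_nonneg (rpow_nonneg (le_of_lt hx) _))
      (rpow_nonneg (le_of_lt hy) _)
  rw [← setLIntegral_ofReal_jointSurvival_mul_rpow] at hfin ⊢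
  exact integral_integral_eq_toReal_lintegral_lintegral h_meas h_nonneg hfin

end

theorem product_moment_via_survival_general {Ω : Type*} [MeasurableSpace Ω] (μ : Measure Ω)
    [IsProbabilityMeasure μ] (X Y : Ω → ℝ) (hX : Measurable X) (hY : Measurable Y)
    (hXnn : μ {ω | 0 ≤ X ω} = 1) (hYnn : μ {ω | 0 ≤ Y ω} = 1)
    (r s : ℝ) (hr : 0 < r) (hs : 0 < s)
    (hXY : Integrable (fun ω => X ω ^ r * Y ω ^ s) μ) :
    ∫ ω, X ω ^ r * Y ω ^ s ∂μ =
      r * s * ∫ x in Ioi (0:ℝ), ∫ y in Ioi (0:ℝ),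
        jointSurvival μ X Y x y * x ^ (r - 1) * y ^ (s - 1) := by
  have hX0 : 0 ≤ᵐ[μ] X := (mem_ae_iff_prob_eq_one (measurableSet_le measurable_const hX)).2 hXnn
  have hY0 : 0 ≤ᵐ[μ] Y := (mem_ae_iff_prob_eq_one (measurableSet_le measurable_const hY)).2 hYnn
  have h_nonneg : 0 ≤ᵐ[μ] fun ω => X ω ^ r * Y ω ^ s := by
    filter_upwards [hX0, hY0] with ω hx hy using mul_nonneg (rpow_nonneg hx r) (rpow_nonneg hy s)
  have h_lin := lintegral_rpow_mul_rpow_eq_lintegral_meas_lt μ hX0 hY0 hX hY hr hs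
  have h_fin := hXY.lintegral_lt_top.ne
  rw [h_lin] at h_fin
  have hrs : ENNReal.ofReal (r * s) ≠ 0 := (ENNReal.ofReal_pos.2 (mul_pos hr hs)).ne'
  rw [integral_eq_lintegral_of_nonneg_ae h_nonneg hXY.1, h_lin,
    integral_jointSurvival_mul_rpow μ hX hY (ENNReal.lt_top_of_mul_ne_top_right h_fin hrs).ne,
    ENNReal.toReal_mul, ENNReal.toReal_ofReal (mul_pos hr hs).le]

theorem product_moment_via_survival {Ω : Type*} [MeasurableSpace Ω] (μ : Measure Ω)
    [IsProbabilityMeasure μ] (X Y : Ω → ℝ) (hX : Measurable X) (hY : Measurable Y)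
    (hXnn : μ {ω | 0 ≤ X ω} = 1) (hYnn : μ {ω | 0 ≤ Y ω} = 1)
    (r s : ℝ) (hr : 0 < r) (hs : 0 < s)
    (hXY : Integrable (fun ω => X ω ^ r * Y ω ^ s) μ)
    (hXr : Integrable (fun ω => X ω ^ r) μ)
    (hYs : Integrable (fun ω => Y ω ^ s) μ) :
    ∫ ω, X ω ^ r * Y ω ^ s ∂μ =
      r * s * ∫ x in Ioi (0:ℝ), ∫ y in Ioi (0:ℝ),
        jointSurvival μ X Y x y * x ^ (r - 1) * y ^ (s - 1) :=
  product_moment_via_survival_general μ X Y hX hY hXnn hYnn r s hr hs hXY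
end

section
/- Let (X,Y) be a BLM pair with parameter θ > 0, and let s, t be real numbers with s + t < θ such that E[exp(sX)], E[exp(tY)] and E[exp(sX+tY)] are finite. Then E[exp(sX+tY)] = ( (θ−s)·E[exp(sX)] + (θ−t)·E[exp(tY)] − θ ) / (θ−s−t). -/
open MeasureTheory Real Set

/-!
For `c ≠ 0` and `z ≥ 0` we have `(exp (c * z) - 1) / c = ∫ x in 0..z, exp (c * x)`, so by the
layer-cake formula `E[(e^{sX} - 1)/s · (e^{tY} - 1)/t] = ∬_{x, y > 0} e^{sx + ty} P(X > x, Y > y)`.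
Cut the quadrant along the diagonal. On `{y ≤ x}` the BLM identity
`P(X > x, Y > y) = e^{-θy} P(X > x - y)` factors the integral into
`∫₀^∞ e^{-(θ-s-t)y} dy = 1/(θ-s-t)` times `∫₀^∞ e^{su} P(X > u) du = E[(e^{sX} - 1)/s]`, and
symmetrically on `{x < y}`. Expanding the product of `e^{sX} - 1` and `e^{tY} - 1` then gives the
formula. Working with lower integrals lets Tonelli run without integrability side conditions.
-/

open scoped ENNReal

theorem integral_exp_mul_of_ne_zero {c : ℝ} (hc : c ≠ 0) (a : ℝ) :
    ∫ x in (0 : ℝ)..a, exp (c * x) = c⁻¹ * (exp (c * a) - 1) := by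
  rw [intervalIntegral.integral_comp_mul_left (fun x => exp x) hc, integral_exp, mul_zero,
    exp_zero, smul_eq_mul]

theorem integral_exp_mul_nonneg (c : ℝ) {a : ℝ} (ha : 0 ≤ a) :
    0 ≤ ∫ x in 0..a, exp (c * x) :=
  intervalIntegral.integral_nonneg ha fun _ _ => (exp_pos _).le

theorem lintegral_Ioi_exp_neg_mul {a : ℝ} (ha : 0 < a) :
    ∫⁻ x in Ioi 0, ENNReal.ofReal (exp (-a * x)) = ENNReal.ofReal (1 / a) := by
  rw [← ofReal_integral_eq_lintegral_ofReal (integrableOn_exp_mul_Ioi (neg_lt_zero.2 ha) 0)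
    (.of_forall fun _ => (exp_pos _).le), integral_exp_mul_Ioi (neg_lt_zero.2 ha), mul_zero,
    exp_zero, neg_div_neg_eq]

theorem setLIntegral_Ioi_comp_sub (g : ℝ → ℝ≥0∞) (x : ℝ) :
    ∫⁻ y in Ioi x, g (y - x) = ∫⁻ u in Ioi 0, g u := by
  have h := (measurePreserving_sub_right volume x).setLIntegral_comp_preimage_emb
    (measurableEmbedding_subRight x) g (Ioi 0)
  rwa [preimage_sub_const_Ioi, zero_add] at h

theorem lintegral_Ioi_lintegral_Ioi_of_eq_exp_mul_comp_sub {θ s t : ℝ} (hst : s + t < θ)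
    {H : ℝ → ℝ → ℝ≥0∞} {F : ℝ → ℝ≥0∞}
    (hH : ∀ x y, 0 < x → x < y → H x y = ENNReal.ofReal (exp (-θ * x)) * F (y - x)) :
    ∫⁻ x in Ioi 0, ∫⁻ y in Ioi x,
        H x y * (ENNReal.ofReal (exp (s * x)) * ENNReal.ofReal (exp (t * y))) =
      ENNReal.ofReal (1 / (θ - s - t)) * ∫⁻ u in Ioi 0, F u * ENNReal.ofReal (exp (t * u)) := by
  have hexp : ∀ a b : ℝ, ENNReal.ofReal (exp (a + b)) =
      ENNReal.ofReal (exp a) * ENNReal.ofReal (exp b) := fun a b => by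
    rw [exp_add, ENNReal.ofReal_mul (exp_pos _).le]
  have inner : ∀ x ∈ Ioi (0 : ℝ), ∫⁻ y in Ioi x,
      H x y * (ENNReal.ofReal (exp (s * x)) * ENNReal.ofReal (exp (t * y))) =
      ENNReal.ofReal (exp (-(θ - s - t) * x)) *
        ∫⁻ u in Ioi 0, F u * ENNReal.ofReal (exp (t * u)) := by
    intro x hx
    rw [← setLIntegral_Ioi_comp_sub _ x, ← lintegral_const_mul' _ _ ENNReal.ofReal_ne_top]
    refine setLIntegral_congr_fun measurableSet_Ioi fun y hy => ?_
    rw [hH x y hx hy, show t * y = t * x + t * (y - x) by ring,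
      show -(θ - s - t) * x = -θ * x + s * x + t * x by ring]
    simp only [hexp]
    ring
  rw [setLIntegral_congr_fun measurableSet_Ioi inner, lintegral_mul_const _ (by fun_prop),
    lintegral_Ioi_exp_neg_mul (by linarith)]

theorem lintegral_mul_primitive_eq_lintegral_meas_lt_mul {Ω : Type*} [MeasurableSpace Ω]
    (μ : Measure Ω) {X Y : Ω → ℝ} (hX : Measurable X) (hY : Measurable Y)
    (hX0 : 0 ≤ᵐ[μ] X) (hY0 : 0 ≤ᵐ[μ] Y) {f g : ℝ → ℝ}
    (hf : ∀ a b, IntervalIntegrable f volume a b) (hg : ∀ a b, IntervalIntegrable g volume a b)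
    (hf0 : ∀ᵐ t ∂volume.restrict (Ioi 0), 0 ≤ f t)
    (hg0 : ∀ᵐ t ∂volume.restrict (Ioi 0), 0 ≤ g t) :
    ∫⁻ ω, ENNReal.ofReal (∫ x in 0..X ω, f x) * ENNReal.ofReal (∫ y in 0..Y ω, g y) ∂μ =
      ∫⁻ x in Ioi 0, ∫⁻ y in Ioi 0,
        μ {ω | x < X ω ∧ y < Y ω} * (ENNReal.ofReal (f x) * ENNReal.ofReal (g y)) := by
  set G : Ω → ℝ≥0∞ := fun ω => ENNReal.ofReal (∫ y in 0..Y ω, g y)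
  have hG : Measurable G :=
    ENNReal.measurable_ofReal.comp ((intervalIntegral.continuous_primitive hg 0).measurable.comp hY)
  have hF : Measurable fun ω => ENNReal.ofReal (∫ x in 0..X ω, f x) :=
    ENNReal.measurable_ofReal.comp ((intervalIntegral.continuous_primitive hf 0).measurable.comp hX)
  -- Layer cake in `y` for `μ` restricted to `{x < X}` turns the weight `g` into the density `G`.
  have inner : ∀ x, ∫⁻ y in Ioi 0, μ {ω | x < X ω ∧ y < Y ω} * ENNReal.ofReal (g y) =
      μ.withDensity G {ω | x < X ω} := by
    intro x
    rw [withDensity_apply _ (measurableSet_lt measurable_const hX),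
      lintegral_comp_eq_lintegral_meas_lt_mul _ (ae_restrict_of_ae hY0) hY.aemeasurable
        (fun t _ => hg 0 t) hg0]
    refine lintegral_congr fun y => ?_
    rw [Measure.restrict_apply (measurableSet_lt measurable_const hY), inter_comm]
    rfl
  calc ∫⁻ ω, ENNReal.ofReal (∫ x in 0..X ω, f x) * G ω ∂μ
      = ∫⁻ ω, ENNReal.ofReal (∫ x in 0..X ω, f x) ∂μ.withDensity G := by
        rw [lintegral_withDensity_eq_lintegral_mul₀ hG.aemeasurable hF.aemeasurable]
        simp only [Pi.mul_apply, mul_comm]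
    _ = ∫⁻ x in Ioi 0, μ.withDensity G {ω | x < X ω} * ENNReal.ofReal (f x) :=
        lintegral_comp_eq_lintegral_meas_lt_mul _
          (withDensity_absolutelyContinuous μ G hX0) hX.aemeasurable (fun t _ => hf 0 t) hf0
    _ = _ := by
        refine lintegral_congr fun x => ?_
        simp only [mul_left_comm _ (ENNReal.ofReal (f x))]
        rw [lintegral_const_mul' _ _ ENNReal.ofReal_ne_top, inner, mul_comm]

namespace IsBLM

variable {Ω : Type*} [MeasurableSpace Ω] {μ : Measure Ω} {X Y : Ω → ℝ} {θ : ℝ}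

theorem ae_pos_left [IsProbabilityMeasure μ] (h : IsBLM μ X Y θ) (hX : Measurable X) :
    ∀ᵐ ω ∂μ, 0 < X ω :=
  (ae_iff_measure_eq (measurableSet_lt measurable_const hX).nullMeasurableSet).2 <| by
    rw [h.2.1, measure_univ]

theorem ae_pos_right [IsProbabilityMeasure μ] (h : IsBLM μ X Y θ) (hY : Measurable Y) :
    ∀ᵐ ω ∂μ, 0 < Y ω :=
  (ae_iff_measure_eq (measurableSet_lt measurable_const hY).nullMeasurableSet).2 <| by
    rw [h.2.2.1, measure_univ]

theorem measure_lt_lt_of_le [IsFiniteMeasure μ] (h : IsBLM μ X Y θ) {x y : ℝ} (hy : 0 ≤ y)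
    (hyx : y ≤ x) :
    μ {ω | x < X ω ∧ y < Y ω} = ENNReal.ofReal (exp (-θ * y)) * μ {ω | x - y < X ω} := by
  rw [← ENNReal.toReal_eq_toReal_iff' (measure_ne_top _ _)
    (ENNReal.mul_ne_top ENNReal.ofReal_ne_top (measure_ne_top _ _)), ENNReal.toReal_mul,
    ENNReal.toReal_ofReal (exp_pos _).le]
  exact h.2.2.2.1 x y hy hyx

theorem measure_lt_lt_of_ge [IsFiniteMeasure μ] (h : IsBLM μ X Y θ) {x y : ℝ} (hx : 0 ≤ x)
    (hxy : x ≤ y) :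
    μ {ω | x < X ω ∧ y < Y ω} = ENNReal.ofReal (exp (-θ * x)) * μ {ω | y - x < Y ω} := by
  rw [← ENNReal.toReal_eq_toReal_iff' (measure_ne_top _ _)
    (ENNReal.mul_ne_top ENNReal.ofReal_ne_top (measure_ne_top _ _)), ENNReal.toReal_mul,
    ENNReal.toReal_ofReal (exp_pos _).le]
  exact h.2.2.2.2 x y hx hxy

theorem lintegral_exp_mul_measure_lt_lt [IsFiniteMeasure μ] (h : IsBLM μ X Y θ)
    (hX : Measurable X) (hY : Measurable Y) {s t : ℝ} (hst : s + t < θ) :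
    ∫⁻ x in Ioi 0, ∫⁻ y in Ioi 0, μ {ω | x < X ω ∧ y < Y ω} *
        (ENNReal.ofReal (exp (s * x)) * ENNReal.ofReal (exp (t * y))) =
      ENNReal.ofReal (1 / (θ - s - t)) *
        ((∫⁻ u in Ioi 0, μ {ω | u < X ω} * ENNReal.ofReal (exp (s * u))) +
          ∫⁻ u in Ioi 0, μ {ω | u < Y ω} * ENNReal.ofReal (exp (t * u))) := by
  set K : ℝ × ℝ → ℝ≥0∞ := fun p => μ {ω | p.1 < X ω ∧ p.2 < Y ω} *
    (ENNReal.ofReal (exp (s * p.1)) * ENNReal.ofReal (exp (t * p.2)))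
  have hK : Measurable K := by
    refine Measurable.mul ?_ (by fun_prop)
    exact measurable_measure_prodMk_left
      ((measurableSet_lt (measurable_fst.comp measurable_fst) (hX.comp measurable_snd)).inter
        (measurableSet_lt (measurable_snd.comp measurable_fst) (hY.comp measurable_snd)))
  have hS : MeasurableSet {p : ℝ × ℝ | p.1 < p.2} := measurableSet_lt measurable_fst measurable_snd
  have hS' : MeasurableSet {p : ℝ × ℝ | p.2 ≤ p.1} := measurableSet_le measurable_snd measurable_fst
  have above : ∫⁻ p in {p : ℝ × ℝ | p.1 < p.2}, K p
      ∂(volume.restrict (Ioi 0)).prod (volume.restrict (Ioi 0)) =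
      ENNReal.ofReal (1 / (θ - s - t)) *
        ∫⁻ u in Ioi 0, μ {ω | u < Y ω} * ENNReal.ofReal (exp (t * u)) := by
    rw [← lintegral_indicator hS, lintegral_prod _ (hK.indicator hS).aemeasurable,
      ← lintegral_Ioi_lintegral_Ioi_of_eq_exp_mul_comp_sub hst
        fun x y hx hxy => h.measure_lt_lt_of_ge hx.le hxy.le]
    refine setLIntegral_congr_fun measurableSet_Ioi fun x hx => ?_
    change ∫⁻ y in Ioi 0, (Ioi x).indicator (fun y => K (x, y)) y = _
    rw [setLIntegral_indicator measurableSet_Ioi, inter_eq_left.2 (Ioi_subset_Ioi hx.le)]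
  have below : ∫⁻ p in {p : ℝ × ℝ | p.2 ≤ p.1}, K p
      ∂(volume.restrict (Ioi 0)).prod (volume.restrict (Ioi 0)) =
      ENNReal.ofReal (1 / (θ - s - t)) *
        ∫⁻ u in Ioi 0, μ {ω | u < X ω} * ENNReal.ofReal (exp (s * u)) := by
    rw [← lintegral_indicator hS', lintegral_prod_symm _ (hK.indicator hS').aemeasurable,
      sub_right_comm, ← lintegral_Ioi_lintegral_Ioi_of_eq_exp_mul_comp_sub (add_comm s t ▸ hst)
        fun y x hy hyx => h.measure_lt_lt_of_le hy.le hyx.le]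
    refine setLIntegral_congr_fun measurableSet_Ioi fun y hy => ?_
    change ∫⁻ x in Ioi 0, (Ici y).indicator (fun x => K (x, y)) x = _
    rw [setLIntegral_indicator measurableSet_Ici, inter_eq_left.2 (Ici_subset_Ioi.2 hy),
      ← Measure.restrict_congr_set Ioi_ae_eq_Ici]
    refine setLIntegral_congr_fun measurableSet_Ioi fun x _ => ?_
    simp only [K, mul_comm (ENNReal.ofReal (exp (s * x)))]
  calc _ = ∫⁻ p, K p ∂(volume.restrict (Ioi 0)).prod (volume.restrict (Ioi 0)) :=
        (lintegral_prod _ hK.aemeasurable).symm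
    _ = _ := by
        rw [← lintegral_add_compl _ hS, compl_ofPred]
        simp only [not_lt]
        rw [above, below, add_comm, ← mul_add]

theorem lintegral_ofReal_primitive_exp_mul [IsProbabilityMeasure μ] (h : IsBLM μ X Y θ)
    (hX : Measurable X) (hY : Measurable Y) {s t : ℝ} (hst : s + t < θ) :
    ∫⁻ ω, ENNReal.ofReal (∫ x in 0..X ω, exp (s * x)) *
        ENNReal.ofReal (∫ y in 0..Y ω, exp (t * y)) ∂μ =
      ENNReal.ofReal (1 / (θ - s - t)) *
        ((∫⁻ ω, ENNReal.ofReal (∫ x in 0..X ω, exp (s * x)) ∂μ) +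
          ∫⁻ ω, ENNReal.ofReal (∫ y in 0..Y ω, exp (t * y)) ∂μ) := by
  have hX0 : 0 ≤ᵐ[μ] X := (h.ae_pos_left hX).mono fun _ hω => hω.le
  have hY0 : 0 ≤ᵐ[μ] Y := (h.ae_pos_right hY).mono fun _ hω => hω.le
  have hint : ∀ c a b : ℝ, IntervalIntegrable (fun x => exp (c * x)) volume a b :=
    fun c => (by fun_prop : Continuous fun x => exp (c * x)).intervalIntegrable
  have hpos : ∀ c : ℝ, ∀ᵐ x ∂volume.restrict (Ioi (0 : ℝ)), 0 ≤ exp (c * x) :=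
    fun _ => .of_forall fun _ => (exp_pos _).le
  rw [lintegral_mul_primitive_eq_lintegral_meas_lt_mul μ hX hY hX0 hY0 (hint s) (hint t)
      (hpos s) (hpos t),
    lintegral_comp_eq_lintegral_meas_lt_mul μ hX0 hX.aemeasurable (fun _ _ => hint s _ _) (hpos s),
    lintegral_comp_eq_lintegral_meas_lt_mul μ hY0 hY.aemeasurable (fun _ _ => hint t _ _) (hpos t)]
  exact h.lintegral_exp_mul_measure_lt_lt hX hY hst

theorem integral_primitive_exp_mul [IsProbabilityMeasure μ] (h : IsBLM μ X Y θ)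
    (hX : Measurable X) (hY : Measurable Y) {s t : ℝ} (hst : s + t < θ)
    (hA : Integrable (fun ω => ∫ x in 0..X ω, exp (s * x)) μ)
    (hB : Integrable (fun ω => ∫ y in 0..Y ω, exp (t * y)) μ)
    (hAB : Integrable (fun ω => (∫ x in 0..X ω, exp (s * x)) * ∫ y in 0..Y ω, exp (t * y)) μ) :
    ∫ ω, (∫ x in 0..X ω, exp (s * x)) * (∫ y in 0..Y ω, exp (t * y)) ∂μ =
      ((∫ ω, (∫ x in 0..X ω, exp (s * x)) ∂μ) + ∫ ω, (∫ y in 0..Y ω, exp (t * y)) ∂μ) /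
        (θ - s - t) := by
  have hA0 : 0 ≤ᵐ[μ] fun ω => ∫ x in 0..X ω, exp (s * x) :=
    (h.ae_pos_left hX).mono fun _ hω => integral_exp_mul_nonneg s hω.le
  have hB0 : 0 ≤ᵐ[μ] fun ω => ∫ y in 0..Y ω, exp (t * y) :=
    (h.ae_pos_right hY).mono fun _ hω => integral_exp_mul_nonneg t hω.le
  have hAB0 : 0 ≤ᵐ[μ] fun ω => (∫ x in 0..X ω, exp (s * x)) * ∫ y in 0..Y ω, exp (t * y) := by
    filter_upwards [hA0, hB0] with ω hAω hBω using mul_nonneg hAω hBω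
  have key := h.lintegral_ofReal_primitive_exp_mul hX hY hst
  rw [← ofReal_integral_eq_lintegral_ofReal hA hA0, ← ofReal_integral_eq_lintegral_ofReal hB hB0,
    ← ENNReal.ofReal_add (integral_nonneg_of_ae hA0) (integral_nonneg_of_ae hB0),
    ← ENNReal.ofReal_mul (one_div_nonneg.2 (by linarith)),
    lintegral_congr_ae (hA0.mono fun _ hω => (ENNReal.ofReal_mul hω).symm),
    ← ofReal_integral_eq_lintegral_ofReal hAB hAB0, ENNReal.ofReal_eq_ofReal_iff
      (integral_nonneg_of_ae hAB0) (mul_nonneg (one_div_nonneg.2 (by linarith))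
        (add_nonneg (integral_nonneg_of_ae hA0) (integral_nonneg_of_ae hB0)))] at key
  rw [key, one_div_mul_eq_div]

end IsBLM

theorem blm_mgf {Ω : Type*} [MeasurableSpace Ω] (μ : Measure Ω)
    [IsProbabilityMeasure μ] (X Y : Ω → ℝ) (hX : Measurable X) (hY : Measurable Y)
    (θ : ℝ) (hBLM : IsBLM μ X Y θ) (s t : ℝ) (hst : s + t < θ)
    (hMX : Integrable (fun ω => Real.exp (s * X ω)) μ)
    (hMY : Integrable (fun ω => Real.exp (t * Y ω)) μ)
    (hMXY : Integrable (fun ω => Real.exp (s * X ω + t * Y ω)) μ) :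
    ∫ ω, Real.exp (s * X ω + t * Y ω) ∂μ =
      ((θ - s) * ∫ ω, Real.exp (s * X ω) ∂μ
        + (θ - t) * ∫ ω, Real.exp (t * Y ω) ∂μ - θ) / (θ - s - t) := by
  rcases eq_or_ne s 0 with rfl | hs
  · have : θ - t ≠ 0 := by linarith
    simp [this]
  rcases eq_or_ne t 0 with rfl | ht
  · have : θ - s ≠ 0 := by linarith
    simp [this]
  have hA := funext fun ω => integral_exp_mul_of_ne_zero hs (X ω)
  have hB := funext fun ω => integral_exp_mul_of_ne_zero ht (Y ω)
  have hAB : (fun ω => (∫ x in 0..X ω, exp (s * x)) * ∫ y in 0..Y ω, exp (t * y)) =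
      fun ω => (s * t)⁻¹ * (exp (s * X ω + t * Y ω) - exp (s * X ω) - exp (t * Y ω) + 1) :=
    funext fun ω => by
      rw [integral_exp_mul_of_ne_zero hs, integral_exp_mul_of_ne_zero ht, exp_add]
      ring
  have key := hBLM.integral_primitive_exp_mul hX hY hst (by rw [hA]; fun_prop)
    (by rw [hB]; fun_prop) (by rw [hAB]; fun_prop)
  rw [hAB, hA, hB, integral_const_mul, integral_const_mul, integral_const_mul,
    integral_add (by fun_prop) (by fun_prop), integral_sub (by fun_prop) hMY,
    integral_sub hMXY hMX, integral_sub hMX (by fun_prop), integral_sub hMY (by fun_prop)] at key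
  simp only [integral_const, probReal_univ, one_smul] at key
  have hθst : θ - s - t ≠ 0 := by linarith
  rw [eq_div_iff hθst] at key ⊢
  field_simp at key
  linear_combination key
end

section
/- Let (X,Y) be a BLM pair with parameter θ > 0. Then the functions x ↦ e^{θx}·P(X>x) and x ↦ e^{θx}·P(Y>x) are nondecreasing on [0,∞) (i.e., an Exp(θ) random variable is smaller than X and than Y in the hazard rate order); consequently P(X>x) ≥ e^{−θx} and P(Y>x) ≥ e^{−θx} for all x ≥ 0 (the usual stochastic order). -/
open MeasureTheory Real Set

theorem blm_hazard_rate_and_stochastic_order {Ω : Type*} [MeasurableSpace Ω] (μ : Measure Ω)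
    [IsProbabilityMeasure μ] (X Y : Ω → ℝ) (hX : Measurable X) (hY : Measurable Y)
    (θ : ℝ) (hBLM : IsBLM μ X Y θ) :
    MonotoneOn (fun x => Real.exp (θ * x) * survival μ X x) (Ici (0:ℝ)) ∧
    MonotoneOn (fun x => Real.exp (θ * x) * survival μ Y x) (Ici (0:ℝ)) ∧
    (∀ x : ℝ, 0 ≤ x → Real.exp (-θ * x) ≤ survival μ X x) ∧
    (∀ x : ℝ, 0 ≤ x → Real.exp (-θ * x) ≤ survival μ Y x) := by
  obtain ⟨hθ, hX0, hY0, h1, h2⟩ := hBLM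
  have key1 : ∀ u b : ℝ, 0 ≤ u → u ≤ b →
      Real.exp (θ * u) * survival μ X u ≤ Real.exp (θ * b) * survival μ X b := by
    intro u b hu hub
    have ha : 0 ≤ b - u := by linarith
    have hab : b - u ≤ b := by linarith
    have heq := h1 b (b - u) ha hab
    have hsub : b - (b - u) = u := by ring
    rw [hsub] at heq
    have hle : jointSurvival μ X Y b (b - u) ≤ survival μ X b := by
      apply ENNReal.toReal_mono (measure_ne_top μ _)
      exact measure_mono (fun ω hω => hω.1)
    rw [heq] at hle
    have h3 := mul_le_mul_of_nonneg_left hle (le_of_lt (Real.exp_pos (θ * b)))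
    have harg : θ * b + -θ * (b - u) = θ * u := by ring
    calc Real.exp (θ * u) * survival μ X u
        = Real.exp (θ * b) * (Real.exp (-θ * (b - u)) * survival μ X u) := by
          rw [← mul_assoc, ← Real.exp_add, harg]
      _ ≤ Real.exp (θ * b) * survival μ X b := h3
  have key2 : ∀ u b : ℝ, 0 ≤ u → u ≤ b →
      Real.exp (θ * u) * survival μ Y u ≤ Real.exp (θ * b) * survival μ Y b := by
    intro u b hu hub
    have ha : 0 ≤ b - u := by linarith
    have hab : b - u ≤ b := by linarith
    have heq := h2 (b - u) b ha hab
    have hsub : b - (b - u) = u := by ring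
    rw [hsub] at heq
    have hle : jointSurvival μ X Y (b - u) b ≤ survival μ Y b := by
      apply ENNReal.toReal_mono (measure_ne_top μ _)
      exact measure_mono (fun ω hω => hω.2)
    rw [heq] at hle
    have h3 := mul_le_mul_of_nonneg_left hle (le_of_lt (Real.exp_pos (θ * b)))
    have harg : θ * b + -θ * (b - u) = θ * u := by ring
    calc Real.exp (θ * u) * survival μ Y u
        = Real.exp (θ * b) * (Real.exp (-θ * (b - u)) * survival μ Y u) := by
          rw [← mul_assoc, ← Real.exp_add, harg]
      _ ≤ Real.exp (θ * b) * survival μ Y b := h3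
  have sX0 : survival μ X 0 = 1 := by simp [survival, hX0]
  have sY0 : survival μ Y 0 = 1 := by simp [survival, hY0]
  have stoch : ∀ (Z : Ω → ℝ),
      (∀ u b : ℝ, 0 ≤ u → u ≤ b →
        Real.exp (θ * u) * survival μ Z u ≤ Real.exp (θ * b) * survival μ Z b) →
      survival μ Z 0 = 1 → ∀ x : ℝ, 0 ≤ x → Real.exp (-θ * x) ≤ survival μ Z x := by
    intro Z hkey hs0 x hx
    have h := hkey 0 x le_rfl hx
    rw [hs0, mul_zero, Real.exp_zero, one_mul] at h
    have h4 := mul_le_mul_of_nonneg_left h (le_of_lt (Real.exp_pos (-θ * x)))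
    rw [mul_one, ← mul_assoc, ← Real.exp_add] at h4
    have harg : -θ * x + θ * x = 0 := by ring
    rw [harg, Real.exp_zero, one_mul] at h4
    exact h4
  exact ⟨fun a ha b hb hab => key1 a b ha hab,
    fun a ha b hb hab => key2 a b ha hab,
    stoch X key1 sX0, stoch Y key2 sY0⟩
end

section
/- Let (X,Y) be a BLM pair with parameter θ > 0 and joint survival function H̄. Then H̄ is bivariate IFRA, i.e. H̄(x,y)^α ≤ H̄(αx, αy) for all α ∈ (0,1) and all x, y ≥ 0, if and only if both marginals are IFRA, i.e. F̄(x)^α ≤ F̄(αx) and Ḡ(x)^α ≤ Ḡ(αx) for all α ∈ (0,1) and all x ≥ 0. -/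
open MeasureTheory Real Set

theorem blm_bivariate_ifra_iff_marginals_ifra {Ω : Type*} [MeasurableSpace Ω] (μ : Measure Ω)
    [IsProbabilityMeasure μ] (X Y : Ω → ℝ) (hX : Measurable X) (hY : Measurable Y)
    (θ : ℝ) (hBLM : IsBLM μ X Y θ) :
    (∀ α : ℝ, 0 < α → α < 1 → ∀ x : ℝ, 0 ≤ x → ∀ y : ℝ, 0 ≤ y →
        jointSurvival μ X Y x y ^ α ≤ jointSurvival μ X Y (α * x) (α * y)) ↔
      ((∀ α : ℝ, 0 < α → α < 1 → ∀ x : ℝ, 0 ≤ x →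
          survival μ X x ^ α ≤ survival μ X (α * x)) ∧
        (∀ α : ℝ, 0 < α → α < 1 → ∀ x : ℝ, 0 ≤ x →
          survival μ Y x ^ α ≤ survival μ Y (α * x))) := by
  obtain ⟨hθ, hX1, hY1, h4, h5⟩ := hBLM
  have hFmarg : ∀ x : ℝ, 0 ≤ x → jointSurvival μ X Y x 0 = survival μ X x := by
    intro x hx
    rw [h4 x 0 le_rfl hx]; simp
  have hGmarg : ∀ y : ℝ, 0 ≤ y → jointSurvival μ X Y 0 y = survival μ Y y := by
    intro y hy
    rw [h5 0 y le_rfl hy]; simp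
  constructor
  · intro h
    constructor
    · intro α hα0 hα1 x hx
      have := h α hα0 hα1 x hx 0 le_rfl
      rwa [mul_zero, hFmarg x hx, hFmarg (α * x) (by positivity)] at this
    · intro α hα0 hα1 y hy
      have := h α hα0 hα1 0 le_rfl y hy
      rwa [mul_zero, hGmarg y hy, hGmarg (α * y) (by positivity)] at this
  · rintro ⟨hF, hG⟩ α hα0 hα1 x hx y hy
    have hsn : ∀ (Z : Ω → ℝ) (t : ℝ), 0 ≤ survival μ Z t := fun Z t => ENNReal.toReal_nonneg
    rcases le_total y x with hxy | hxy
    · rw [h4 x y hy hxy, h4 (α * x) (α * y) (by positivity)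
        (by exact mul_le_mul_of_nonneg_left hxy hα0.le)]
      rw [Real.mul_rpow (Real.exp_pos _).le (hsn X _)]
      have he : Real.exp (-θ * y) ^ α = Real.exp (-θ * (α * y)) := by
        rw [← Real.exp_mul]; ring_nf
      have haxy : α * x - α * y = α * (x - y) := by ring
      rw [he, haxy]
      exact mul_le_mul_of_nonneg_left (hF α hα0 hα1 (x - y) (sub_nonneg.mpr hxy))
        (Real.exp_pos _).le
    · rw [h5 x y hx hxy, h5 (α * x) (α * y) (by positivity)
        (by exact mul_le_mul_of_nonneg_left hxy hα0.le)]
      rw [Real.mul_rpow (Real.exp_pos _).le (hsn Y _)]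
      have he : Real.exp (-θ * x) ^ α = Real.exp (-θ * (α * x)) := by
        rw [← Real.exp_mul]; ring_nf
      have haxy : α * y - α * x = α * (y - x) := by ring
      rw [he, haxy]
      exact mul_le_mul_of_nonneg_left (hG α hα0 hα1 (y - x) (sub_nonneg.mpr hxy))
        (Real.exp_pos _).le
end

section
/- Let θ > 0 and let h₁, h₂ : (0,∞) → (0,∞) be twice differentiable functions that extend continuously to 0 with finite right limits h₁(0⁺) and h₂(0⁺) satisfying h₁(0⁺) = h₂(0⁺). Define h(x,y) = e^{−θy}·h₁(x−y) for x > y > 0, h(x,y) = e^{−θx}·h₂(y−x) for 0 < x < y, and h(x,x) = e^{−θx}·h₁(0⁺) for x > 0. Then h is TP₂ on (0,∞)×(0,∞) if and only if (i) (h_i′(x))² ≥ h_i″(x)·h_i(x) for all x > 0 and i = 1, 2, and (ii) h₁(x)·h₂(x) ≤ h₁(0⁺)²·e^{−θx} for all x > 0. -/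
/-!
Write `h x y = exp (-θ x / 2) * exp (-θ y / 2) * g (x - y)` with `g = blmProfile θ c h₁ h₂`.
Then `h` is TP₂ on the open quadrant exactly when `g` satisfies the four-point inequality
`IsPF2 g`, i.e. when `log g` is concave on ℝ. On `(0, ∞)`, `log g t = θ t / 2 + log (h₁ t)`, so
concavity there is condition (i) for `h₁`, and the symmetry `g (-t) = blmProfile θ c h₂ h₁ t`
gives the same for `h₂` on `(-∞, 0)`. A function concave on both closed half-lines is concave on ℝ
as soon as `f x + f (-x) ≤ 2 f 0`, which for `log g` is condition (ii). Conversely, the four-point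
inequality makes the increments of `log h₁` decrease, so `h₁' / h₁` is antitone, which is (i).
-/

open Real Set Filter

/-- `K` is totally positive of order two on `S × T`. -/
def TP2 (K : ℝ → ℝ → ℝ) (S T : Set ℝ) : Prop :=
  ∀ x₁ ∈ S, ∀ x₂ ∈ S, ∀ y₁ ∈ T, ∀ y₂ ∈ T, x₁ < x₂ → y₁ < y₂ →
    K x₁ y₂ * K x₂ y₁ ≤ K x₁ y₁ * K x₂ y₂

open Topology

/-- The four-point inequality making the translation kernel `(x, y) ↦ g (x - y)` TP₂
(`g` is a Pólya frequency function of order two), in the coordinates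
`s = x₁ - y₂`, `α = x₂ - x₁`, `β = y₂ - y₁`. -/
def IsPF2 (g : ℝ → ℝ) : Prop :=
  ∀ s α β : ℝ, 0 < α → 0 < β → g s * g (s + α + β) ≤ g (s + α) * g (s + β)

namespace IsPF2

variable {g : ℝ → ℝ}

lemma comp_neg (hg : IsPF2 g) : IsPF2 (fun t => g (-t)) := by
  intro s α β hα hβ
  have := hg (-(s + α + β)) α β hα hβ
  rw [show -(s + α + β) + α + β = -s by ring, show -(s + α + β) + α = -(s + β) by ring,
    show -(s + α + β) + β = -(s + α) by ring] at this
  linarith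

lemma mul_neg_le_sq (hg : IsPF2 g) {x : ℝ} (hx : 0 < x) : g x * g (-x) ≤ g 0 ^ 2 := by
  have := hg (-x) x x hx hx
  rw [show -x + x + x = x by ring, neg_add_cancel] at this
  linarith

end IsPF2

lemma tp2_iff_isPF2 {K : ℝ → ℝ → ℝ} {a b g : ℝ → ℝ} (ha : ∀ x, 0 < x → 0 < a x)
    (hb : ∀ y, 0 < y → 0 < b y) (hK : ∀ x y, 0 < x → 0 < y → K x y = a x * b y * g (x - y)) :
    TP2 K (Ioi 0) (Ioi 0) ↔ IsPF2 g := by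
  have key : ∀ x₁ x₂ y₁ y₂ : ℝ, 0 < x₁ → 0 < x₂ → 0 < y₁ → 0 < y₂ →
      (K x₁ y₂ * K x₂ y₁ ≤ K x₁ y₁ * K x₂ y₂ ↔
        g (x₁ - y₂) * g (x₂ - y₁) ≤ g (x₂ - y₂) * g (x₁ - y₁)) := by
    intro x₁ x₂ y₁ y₂ hx₁ hx₂ hy₁ hy₂
    set P := a x₁ * a x₂ * (b y₁ * b y₂)
    have hP : 0 < P := mul_pos (mul_pos (ha _ hx₁) (ha _ hx₂)) (mul_pos (hb _ hy₁) (hb _ hy₂))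
    rw [hK _ _ hx₁ hy₂, hK _ _ hx₂ hy₁, hK _ _ hx₁ hy₁, hK _ _ hx₂ hy₂,
      show a x₁ * b y₂ * g (x₁ - y₂) * (a x₂ * b y₁ * g (x₂ - y₁))
        = P * (g (x₁ - y₂) * g (x₂ - y₁)) by ring,
      show a x₁ * b y₁ * g (x₁ - y₁) * (a x₂ * b y₂ * g (x₂ - y₂))
        = P * (g (x₂ - y₂) * g (x₁ - y₁)) by ring, mul_le_mul_iff_right₀ hP]
  constructor
  · intro hK s α β hα hβ
    set y₁ := |s| + 1
    set y₂ := y₁ + β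
    set x₁ := y₂ + s
    set x₂ := x₁ + α
    have hy₁ : 0 < y₁ := by positivity
    have hx₁ : 0 < x₁ := by linarith [neg_abs_le s]
    have := (key x₁ x₂ y₁ y₂ hx₁ (by linarith) hy₁ (by linarith)).1
      (hK x₁ hx₁ x₂ (mem_Ioi.2 (by linarith)) y₁ hy₁ y₂ (mem_Ioi.2 (by linarith))
        (by linarith) (by linarith))
    convert this using 2 <;> congr 1 <;> ring
  · intro hg x₁ hx₁ x₂ hx₂ y₁ hy₁ y₂ hy₂ hx hy
    refine (key _ _ _ _ hx₁ hx₂ hy₁ hy₂).2 ?_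
    convert hg (x₁ - y₂) (x₂ - x₁) (y₂ - y₁) (sub_pos.2 hx) (sub_pos.2 hy) using 3 <;> ring

lemma HasDerivAt.nonpos_of_antitoneOn_of_isOpen {g : ℝ → ℝ} {g' x : ℝ} {s : Set ℝ}
    (hd : HasDerivAt g g' x) (hg : AntitoneOn g s) (hs : IsOpen s) (hx : x ∈ s) : g' ≤ 0 := by
  simpa only [derivWithin_of_isOpen hs hx, hd.deriv] using hg.derivWithin_nonpos (x := x)

lemma hasDerivAt_deriv_div_self {f f' f'' : ℝ → ℝ} {x : ℝ} (hfx : f x ≠ 0)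
    (hd : HasDerivAt f (f' x) x) (hd' : HasDerivAt f' (f'' x) x) :
    HasDerivAt (fun t => f' t / f t) ((f'' x * f x - f' x ^ 2) / f x ^ 2) x := by
  have := hd'.div hd hfx
  rwa [← sq] at this

lemma antitoneOn_deriv_of_four_point {φ φ' : ℝ → ℝ} {a : ℝ}
    (hφ : ∀ x, a < x → HasDerivAt φ (φ' x) x)
    (h4 : ∀ s α β, a < s → 0 < α → 0 < β → φ s + φ (s + α + β) ≤ φ (s + α) + φ (s + β)) :
    AntitoneOn φ' (Ioi a) := by
  intro t ht u hu htu
  obtain rfl | htu := htu.eq_or_lt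
  · rfl
  have hincr : AntitoneOn (fun y => φ (y + (u - t)) - φ y) (Ioi a) := by
    intro y hy y' _ hyy'
    obtain rfl | hyy' := hyy'.eq_or_lt
    · rfl
    have := h4 y (y' - y) (u - t) hy (sub_pos.2 hyy') (sub_pos.2 htu)
    rw [add_sub_cancel] at this
    dsimp only
    linarith
  have hder : HasDerivAt (fun y => φ (y + (u - t)) - φ y) (φ' u - φ' t) t := by
    have hu' : HasDerivAt φ (φ' u) (t + (u - t)) := by
      rw [add_sub_cancel]; exact hφ u hu
    exact (hu'.comp_add_const t (u - t)).sub (hφ t ht)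
  linarith [hder.nonpos_of_antitoneOn_of_isOpen hincr isOpen_Ioi ht]

def AboveChord (f : ℝ → ℝ) (x y z : ℝ) : Prop :=
  (z - y) * f x + (y - x) * f z ≤ (z - x) * f y

section AboveChord

variable {f : ℝ → ℝ}

lemma ConcaveOn.aboveChord {s : Set ℝ} (hf : ConcaveOn ℝ s f) {x y z : ℝ} (hx : x ∈ s)
    (hz : z ∈ s) (hxy : x < y) (hyz : y < z) : AboveChord f x y z := by
  have := hf.neg.secant_mono_aux1 hx hz hxy hyz
  simp only [Pi.neg_apply] at this
  unfold AboveChord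
  linarith

lemma concaveOn_univ_of_aboveChord (h : ∀ x y z, x < y → y < z → AboveChord f x y z) :
    ConcaveOn ℝ univ f := by
  refine concaveOn_of_slope_anti_adjacent convex_univ fun {x y z} _ _ hxy hyz => ?_
  rw [div_le_div_iff₀ (sub_pos.2 hyz) (sub_pos.2 hxy)]
  have := h x y z hxy hyz
  unfold AboveChord at this
  linarith

lemma aboveChord_comp_neg_iff {x y z : ℝ} :
    AboveChord (fun t => f (-t)) (-z) (-y) (-x) ↔ AboveChord f x y z := by
  unfold AboveChord
  simp only [neg_neg]
  constructor <;> intro h <;> linarith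

lemma AboveChord.extend {x y w z : ℝ} (hxy : x < y) (hyw : y < w) (hwz : w < z)
    (h₁ : AboveChord f x y w) (h₂ : AboveChord f y w z) :
    AboveChord f x y z ∧ AboveChord f x w z := by
  unfold AboveChord at *
  constructor
  · nlinarith [mul_le_mul_of_nonneg_left h₁ (sub_pos.2 (hyw.trans hwz)).le,
      mul_le_mul_of_nonneg_left h₂ (sub_pos.2 hxy).le]
  · nlinarith [mul_le_mul_of_nonneg_left h₁ (sub_pos.2 hwz).le,
      mul_le_mul_of_nonneg_left h₂ (sub_pos.2 (hxy.trans hyw)).le]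

end AboveChord

lemma concaveOn_univ_of_concaveOn_Ici {f : ℝ → ℝ} (hpos : ConcaveOn ℝ (Ici 0) f)
    (hneg : ConcaveOn ℝ (Ici 0) (fun t => f (-t)))
    (hkink : ∀ x, 0 < x → f x + f (-x) ≤ 2 * f 0) : ConcaveOn ℝ univ f := by
  have hP : ∀ x y z, 0 ≤ x → x < y → y < z → AboveChord f x y z := fun x y z hx hxy hyz =>
    hpos.aboveChord hx (hx.trans (hxy.trans hyz).le) hxy hyz
  have hN : ∀ x y z, z ≤ 0 → x < y → y < z → AboveChord f x y z := fun x y z hz hxy hyz =>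
    aboveChord_comp_neg_iff.1 <| hneg.aboveChord (neg_nonneg.2 hz)
      (neg_nonneg.2 (hz.trans' (hxy.trans hyz).le)) (neg_lt_neg hyz) (neg_lt_neg hxy)
  have hsymm : ∀ r, 0 < r → AboveChord f (-r) 0 r := fun r hr => by
    unfold AboveChord
    nlinarith [hkink r hr]
  have hK : ∀ a b, a < 0 → 0 < b → AboveChord f a 0 b := by
    intro a b ha hb
    rcases lt_trichotomy (-a) b with hab | hab | hab
    · have := hsymm (-a) (neg_pos.2 ha)
      rw [neg_neg] at this
      exact (this.extend ha (neg_pos.2 ha) hab (hP 0 (-a) b le_rfl (neg_pos.2 ha) hab)).1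
    · simpa [← hab] using hsymm (-a) (neg_pos.2 ha)
    · have h := hN a (-b) 0 le_rfl (by linarith) (neg_lt_zero.2 hb)
      exact (h.extend (by linarith) (neg_lt_zero.2 hb) hb (hsymm b hb)).2
  refine concaveOn_univ_of_aboveChord fun x y z hxy hyz => ?_
  rcases le_or_gt 0 x with hx | hx
  · exact hP x y z hx hxy hyz
  rcases le_or_gt z 0 with hz | hz
  · exact hN x y z hz hxy hyz
  rcases lt_trichotomy y 0 with hy | rfl | hy
  · exact ((hN x y 0 le_rfl hxy hy).extend hxy hy hz (hK y z hy hz)).1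
  · exact hK x z hx hz
  · exact ((hK x y hx hy).extend hx hy hyz (hP 0 y z le_rfl hy hyz)).2

lemma ConcaveOn.add_le_add_of_add_eq {s : Set ℝ} {f : ℝ → ℝ} (hf : ConcaveOn ℝ s f)
    {x y w z : ℝ} (hx : x ∈ s) (hz : z ∈ s) (hxy : x < y) (hyz : y < z) (hxw : x < w)
    (hwz : w < z) (h : y + w = x + z) : f x + f z ≤ f y + f w := by
  have hy := hf.aboveChord hx hz hxy hyz
  have hw := hf.aboveChord hx hz hxw hwz
  unfold AboveChord at hy hw
  have hsum : (z - x) * (f x + f z) ≤ (z - x) * (f y + f w) := by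
    have hzw : z - w = y - x := by linarith
    have hwx : w - x = z - y := by linarith
    rw [hzw, hwx] at hw
    linarith
  exact le_of_mul_le_mul_left hsum (sub_pos.2 (hxy.trans hyz))

lemma isPF2_of_concaveOn_log {g : ℝ → ℝ} (hg : ∀ t, 0 < g t)
    (hconc : ConcaveOn ℝ univ (fun t => log (g t))) : IsPF2 g := by
  intro s α β hα hβ
  have := hconc.add_le_add_of_add_eq (mem_univ s) (mem_univ (s + α + β)) (x := s)
    (y := s + α) (w := s + β) (by linarith) (by linarith) (by linarith) (by linarith) (by ring)
  rwa [← log_mul (hg _).ne' (hg _).ne', ← log_mul (hg _).ne' (hg _).ne',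
    log_le_log_iff (mul_pos (hg _) (hg _)) (mul_pos (hg _) (hg _))] at this

noncomputable def blmProfile (θ c : ℝ) (h₁ h₂ : ℝ → ℝ) (t : ℝ) : ℝ :=
  if 0 < t then exp (θ / 2 * t) * h₁ t else if t < 0 then exp (θ / 2 * -t) * h₂ (-t) else c

section blmProfile

variable {θ c : ℝ} {h₁ h₂ : ℝ → ℝ}

lemma blmProfile_of_pos {t : ℝ} (ht : 0 < t) :
    blmProfile θ c h₁ h₂ t = exp (θ / 2 * t) * h₁ t := by
  simp [blmProfile, ht]

lemma blmProfile_zero : blmProfile θ c h₁ h₂ 0 = c := by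
  simp [blmProfile]

lemma blmProfile_neg (t : ℝ) : blmProfile θ c h₁ h₂ (-t) = blmProfile θ c h₂ h₁ t := by
  rcases lt_trichotomy t 0 with ht | rfl | ht
  · simp [blmProfile, ht, ht.not_gt]
  · simp [blmProfile]
  · simp [blmProfile, ht, ht.not_gt]

lemma blmProfile_pos (hc : 0 < c) (h₁pos : ∀ x, 0 < x → 0 < h₁ x)
    (h₂pos : ∀ x, 0 < x → 0 < h₂ x) (t : ℝ) : 0 < blmProfile θ c h₁ h₂ t := by
  rcases lt_trichotomy t 0 with ht | rfl | ht
  · rw [← neg_neg t, blmProfile_neg, blmProfile_of_pos (neg_pos.2 ht)]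
    exact mul_pos (exp_pos _) (h₂pos _ (neg_pos.2 ht))
  · rwa [blmProfile_zero]
  · rw [blmProfile_of_pos ht]
    exact mul_pos (exp_pos _) (h₁pos _ ht)

lemma log_blmProfile_of_pos (h₁pos : ∀ x, 0 < x → 0 < h₁ x) {t : ℝ} (ht : 0 < t) :
    log (blmProfile θ c h₁ h₂ t) = θ / 2 * t + log (h₁ t) := by
  rw [blmProfile_of_pos ht, log_mul (exp_ne_zero _) (h₁pos t ht).ne', log_exp]

lemma blmProfile_mul_neg_le_sq_iff {x : ℝ} (hx : 0 < x) :
    blmProfile θ c h₁ h₂ x * blmProfile θ c h₁ h₂ (-x) ≤ c ^ 2 ↔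
      h₁ x * h₂ x ≤ c ^ 2 * exp (-θ * x) := by
  rw [blmProfile_neg, blmProfile_of_pos hx, blmProfile_of_pos hx,
    show exp (θ / 2 * x) * h₁ x * (exp (θ / 2 * x) * h₂ x) = exp (θ * x) * (h₁ x * h₂ x) by
      rw [mul_mul_mul_comm, ← exp_add]; ring_nf,
    neg_mul, exp_neg, ← div_eq_mul_inv, le_div_iff₀ (exp_pos _), mul_comm]

lemma blm_density_eq {h : ℝ → ℝ → ℝ}
    (hgt : ∀ x y : ℝ, 0 < y → y < x → h x y = exp (-θ * y) * h₁ (x - y))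
    (hlt : ∀ x y : ℝ, 0 < x → x < y → h x y = exp (-θ * x) * h₂ (y - x))
    (heq : ∀ x : ℝ, 0 < x → h x x = exp (-θ * x) * c) {x y : ℝ} (hx : 0 < x) (hy : 0 < y) :
    h x y = exp (-(θ / 2) * x) * exp (-(θ / 2) * y) * blmProfile θ c h₁ h₂ (x - y) := by
  rcases lt_trichotomy x y with hxy | rfl | hxy
  · rw [hlt x y hx hxy, show x - y = -(y - x) by ring, blmProfile_neg,
      blmProfile_of_pos (sub_pos.2 hxy), ← mul_assoc, ← exp_add, ← exp_add]
    ring_nf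
  · rw [heq x hx, sub_self, blmProfile_zero, ← exp_add]
    ring_nf
  · rw [hgt x y hy hxy, blmProfile_of_pos (sub_pos.2 hxy), ← mul_assoc, ← exp_add, ← exp_add]
    ring_nf

end blmProfile

lemma IsPF2.mul_le_sq_of_blmProfile {θ c : ℝ} {f f' f'' k : ℝ → ℝ}
    (hg : IsPF2 (blmProfile θ c f k)) (hf : ∀ x, 0 < x → 0 < f x)
    (hd : ∀ x, 0 < x → HasDerivAt f (f' x) x) (hd' : ∀ x, 0 < x → HasDerivAt f' (f'' x) x) :
    ∀ x, 0 < x → f'' x * f x ≤ f' x ^ 2 := by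
  have hpos : ∀ t, 0 < t → 0 < blmProfile θ c f k t := fun t ht => by
    rw [blmProfile_of_pos ht]; exact mul_pos (exp_pos _) (hf t ht)
  have h4 : ∀ s α β, 0 < s → 0 < α → 0 < β → log (f s) + log (f (s + α + β)) ≤
      log (f (s + α)) + log (f (s + β)) := by
    intro s α β hs hα hβ
    have := log_le_log (mul_pos (hpos _ hs) (hpos _ (by linarith))) (hg s α β hα hβ)
    rw [log_mul (hpos _ hs).ne' (hpos _ (by linarith)).ne',
      log_mul (hpos _ (by linarith)).ne' (hpos _ (by linarith)).ne',
      log_blmProfile_of_pos hf hs, log_blmProfile_of_pos hf (by linarith),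
      log_blmProfile_of_pos hf (by linarith), log_blmProfile_of_pos hf (by linarith)] at this
    linarith
  have hanti : AntitoneOn (fun t => f' t / f t) (Ioi 0) :=
    antitoneOn_deriv_of_four_point (fun x hx => (hd x hx).log (hf x hx).ne') h4
  intro x hx
  have hder := hasDerivAt_deriv_div_self (hf x hx).ne' (hd x hx) (hd' x hx)
  have := hder.nonpos_of_antitoneOn_of_isOpen hanti isOpen_Ioi hx
  linarith [(div_le_iff₀ (pow_pos (hf x hx) 2)).1 this]

lemma concaveOn_log_blmProfile_Ici {θ c : ℝ} {f f' f'' k : ℝ → ℝ}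
    (hf : ∀ x, 0 < x → 0 < f x) (hd : ∀ x, 0 < x → HasDerivAt f (f' x) x)
    (hd' : ∀ x, 0 < x → HasDerivAt f' (f'' x) x) (hc : 0 < c) (hlim : Tendsto f (𝓝[>] 0) (𝓝 c))
    (hcond : ∀ x, 0 < x → f'' x * f x ≤ f' x ^ 2) :
    ConcaveOn ℝ (Ici 0) (fun t => log (blmProfile θ c f k t)) := by
  have hlog : ∀ᶠ t in 𝓝[>] 0, θ / 2 * t + log (f t) = log (blmProfile θ c f k t) :=
    eventually_nhdsWithin_of_forall fun t ht => (log_blmProfile_of_pos hf ht).symm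
  have hder : ∀ x, 0 < x →
      HasDerivAt (fun t => log (blmProfile θ c f k t)) (θ / 2 + f' x / f x) x := by
    intro x hx
    have := ((hasDerivAt_id x).const_mul (θ / 2)).add ((hd x hx).log (hf x hx).ne')
    rw [mul_one] at this
    exact this.congr_of_eventuallyEq <| (eventually_gt_nhds hx).mono fun t ht =>
      log_blmProfile_of_pos hf ht
  refine concaveOn_of_hasDerivWithinAt2_nonpos (convex_Ici 0) ?_ ?_ ?_ ?_
    (f' := fun x => θ / 2 + f' x / f x) (f'' := fun x => (f'' x * f x - f' x ^ 2) / f x ^ 2)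
  · intro t ht
    rcases (mem_Ici.1 ht).eq_or_lt with rfl | ht
    · have hlim' : Tendsto (fun t => θ / 2 * t + log (f t)) (𝓝[>] 0) (𝓝 (log c)) := by
        simpa using (((continuous_const_mul (θ / 2)).tendsto 0).mono_left nhdsWithin_le_nhds).add
          ((continuousAt_log hc.ne').tendsto.comp hlim)
      refine continuousWithinAt_Ioi_iff_Ici.1 ?_
      rw [ContinuousWithinAt, blmProfile_zero]
      exact hlim'.congr' hlog
    · exact (hder t ht).continuousAt.continuousWithinAt
  all_goals rw [interior_Ici]
  · exact fun x hx => (hder x hx).hasDerivWithinAt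
  · exact fun x hx =>
      ((hasDerivAt_deriv_div_self (hf x hx).ne' (hd x hx) (hd' x hx)).const_add _).hasDerivWithinAt
  · exact fun x hx => div_nonpos_of_nonpos_of_nonneg (by linarith [hcond x hx]) (sq_nonneg _)

theorem blm_density_tp2_iff_general (θ : ℝ)
    (h₁ h₂ h₁' h₂' h₁'' h₂'' : ℝ → ℝ)
    (h₁pos : ∀ x : ℝ, 0 < x → 0 < h₁ x) (h₂pos : ∀ x : ℝ, 0 < x → 0 < h₂ x)
    (hd₁ : ∀ x : ℝ, 0 < x → HasDerivAt h₁ (h₁' x) x)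
    (hd₁' : ∀ x : ℝ, 0 < x → HasDerivAt h₁' (h₁'' x) x)
    (hd₂ : ∀ x : ℝ, 0 < x → HasDerivAt h₂ (h₂' x) x)
    (hd₂' : ∀ x : ℝ, 0 < x → HasDerivAt h₂' (h₂'' x) x)
    (c : ℝ)
    (hlim₁ : Tendsto h₁ (nhdsWithin 0 (Ioi 0)) (nhds c))
    (hlim₂ : Tendsto h₂ (nhdsWithin 0 (Ioi 0)) (nhds c))
    (h : ℝ → ℝ → ℝ)
    (hgt : ∀ x y : ℝ, 0 < y → y < x → h x y = Real.exp (-θ * y) * h₁ (x - y))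
    (hlt : ∀ x y : ℝ, 0 < x → x < y → h x y = Real.exp (-θ * x) * h₂ (y - x))
    (heq : ∀ x : ℝ, 0 < x → h x x = Real.exp (-θ * x) * c) :
    TP2 h (Ioi 0) (Ioi 0) ↔
      ((∀ x : ℝ, 0 < x → h₁'' x * h₁ x ≤ (h₁' x) ^ 2) ∧
        (∀ x : ℝ, 0 < x → h₂'' x * h₂ x ≤ (h₂' x) ^ 2) ∧
        ∀ x : ℝ, 0 < x → h₁ x * h₂ x ≤ c ^ 2 * Real.exp (-θ * x)) := by
  have hexp : ∀ x : ℝ, 0 < x → 0 < exp (-(θ / 2) * x) := fun x _ => exp_pos _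
  rw [tp2_iff_isPF2 hexp hexp fun x y hx hy => blm_density_eq hgt hlt heq hx hy]
  have hswap : (fun t => blmProfile θ c h₁ h₂ (-t)) = blmProfile θ c h₂ h₁ :=
    funext blmProfile_neg
  constructor
  · intro hg
    refine ⟨hg.mul_le_sq_of_blmProfile h₁pos hd₁ hd₁', ?_, fun x hx => ?_⟩
    · exact (hswap ▸ hg.comp_neg).mul_le_sq_of_blmProfile h₂pos hd₂ hd₂'
    · simpa only [blmProfile_mul_neg_le_sq_iff hx, blmProfile_zero] using hg.mul_neg_le_sq hx
  · rintro ⟨hcond₁, hcond₂, hprod⟩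
    have hc : 0 < c := by
      refine (ge_of_tendsto hlim₁ (eventually_nhdsWithin_of_forall fun x hx =>
        (h₁pos x hx).le)).lt_of_ne fun hc => ?_
      have := hprod 1 one_pos
      rw [← hc, zero_pow two_ne_zero, zero_mul] at this
      linarith [mul_pos (h₁pos 1 one_pos) (h₂pos 1 one_pos)]
    have hg := blmProfile_pos (θ := θ) hc h₁pos h₂pos
    refine isPF2_of_concaveOn_log hg (concaveOn_univ_of_concaveOn_Ici ?_ ?_ fun x hx => ?_)
    · exact concaveOn_log_blmProfile_Ici h₁pos hd₁ hd₁' hc hlim₁ hcond₁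
    · simpa only [blmProfile_neg] using
        concaveOn_log_blmProfile_Ici (k := h₁) h₂pos hd₂ hd₂' hc hlim₂ hcond₂
    · have := log_le_log (mul_pos (hg x) (hg (-x)))
        ((blmProfile_mul_neg_le_sq_iff hx).2 (hprod x hx))
      rw [log_mul (hg x).ne' (hg (-x)).ne', sq, log_mul hc.ne' hc.ne'] at this
      rw [blmProfile_zero]
      linarith

theorem blm_density_tp2_iff (θ : ℝ) (hθ : 0 < θ)
    (h₁ h₂ h₁' h₂' h₁'' h₂'' : ℝ → ℝ)
    (h₁pos : ∀ x : ℝ, 0 < x → 0 < h₁ x) (h₂pos : ∀ x : ℝ, 0 < x → 0 < h₂ x)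
    (hd₁ : ∀ x : ℝ, 0 < x → HasDerivAt h₁ (h₁' x) x)
    (hd₁' : ∀ x : ℝ, 0 < x → HasDerivAt h₁' (h₁'' x) x)
    (hd₂ : ∀ x : ℝ, 0 < x → HasDerivAt h₂ (h₂' x) x)
    (hd₂' : ∀ x : ℝ, 0 < x → HasDerivAt h₂' (h₂'' x) x)
    (c : ℝ)
    (hlim₁ : Tendsto h₁ (nhdsWithin 0 (Ioi 0)) (nhds c))
    (hlim₂ : Tendsto h₂ (nhdsWithin 0 (Ioi 0)) (nhds c))
    (h : ℝ → ℝ → ℝ)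
    (hgt : ∀ x y : ℝ, 0 < y → y < x → h x y = Real.exp (-θ * y) * h₁ (x - y))
    (hlt : ∀ x y : ℝ, 0 < x → x < y → h x y = Real.exp (-θ * x) * h₂ (y - x))
    (heq : ∀ x : ℝ, 0 < x → h x x = Real.exp (-θ * x) * c) :
    TP2 h (Ioi 0) (Ioi 0) ↔
      ((∀ x : ℝ, 0 < x → h₁'' x * h₁ x ≤ (h₁' x) ^ 2) ∧
        (∀ x : ℝ, 0 < x → h₂'' x * h₂ x ≤ (h₂' x) ^ 2) ∧
        ∀ x : ℝ, 0 < x → h₁ x * h₂ x ≤ c ^ 2 * Real.exp (-θ * x)) :=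
  blm_density_tp2_iff_general θ h₁ h₂ h₁' h₂' h₁'' h₂'' h₁pos h₂pos hd₁ hd₁' hd₂ hd₂' c hlim₁ hlim₂
    h hgt hlt heq
end

section
/- Let K be a strictly positive function on D = (a,b)×(c,d). Suppose that for each fixed x ∈ (a,b) the function y ↦ log K(x,y) is differentiable on (c,d) with derivative L(x,y), and that for each fixed y ∈ (c,d) the function x ↦ L(x,y) is differentiable on (a,b) with derivative γ(x,y) (the local dependence function γ(x,y) = ∂²/∂x∂y log K(x,y)). Then K is TP₂ on D if and only if γ(x,y) ≥ 0 for all (x,y) ∈ D. -/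
open Real Set Filter Topology

private lemma aux_deriv_nonneg {f : ℝ → ℝ} {c d x f' : ℝ} (hx : x ∈ Ioo c d)
    (hf : HasDerivAt f f' x) (hm : MonotoneOn f (Ioo c d)) : 0 ≤ f' := by
  have hslope := hasDerivAt_iff_tendsto_slope.mp hf
  have hne : (𝓝[Ioo x d] x).NeBot := left_nhdsWithin_Ioo_neBot hx.2
  have hle : 𝓝[Ioo x d] x ≤ 𝓝[≠] x :=
    nhdsWithin_mono _ (fun y hy => ne_of_gt hy.1)
  refine ge_of_tendsto (hslope.mono_left hle) ?_
  filter_upwards [self_mem_nhdsWithin] with y hy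
  have hy' : y ∈ Ioo c d := ⟨hx.1.trans hy.1, hy.2⟩
  have hfy := hm hx hy' hy.1.le
  rw [slope_def_field]
  exact div_nonneg (by linarith) (by linarith [hy.1])

private lemma aux_mono {f f' : ℝ → ℝ} {c d : ℝ}
    (hd : ∀ y ∈ Ioo c d, HasDerivAt f (f' y) y)
    (hpos : ∀ y ∈ Ioo c d, 0 ≤ f' y) : MonotoneOn f (Ioo c d) := by
  apply monotoneOn_of_deriv_nonneg (convex_Ioo c d)
  · exact fun y hy => (hd y hy).differentiableAt.continuousAt.continuousWithinAt
  · intro y hy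
    rw [interior_Ioo] at hy
    exact (hd y hy).differentiableAt.differentiableWithinAt
  · intro y hy
    rw [interior_Ioo] at hy
    rw [(hd y hy).deriv]
    exact hpos y hy

theorem tp2_iff_local_dependence_nonneg (a b c d : ℝ)
    (K L γ : ℝ → ℝ → ℝ)
    (hKpos : ∀ x ∈ Ioo a b, ∀ y ∈ Ioo c d, 0 < K x y)
    (hL : ∀ x ∈ Ioo a b, ∀ y ∈ Ioo c d,
      HasDerivAt (fun y' => Real.log (K x y')) (L x y) y)
    (hγ : ∀ x ∈ Ioo a b, ∀ y ∈ Ioo c d,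
      HasDerivAt (fun x' => L x' y) (γ x y) x) :
    TP2 K (Ioo a b) (Ioo c d) ↔ ∀ x ∈ Ioo a b, ∀ y ∈ Ioo c d, 0 ≤ γ x y := by
  constructor
  · intro hTP x hx y hy
    -- L is monotone in x, for every y' ∈ Ioo c d
    have hLmono : ∀ y' ∈ Ioo c d, MonotoneOn (fun x' => L x' y') (Ioo a b) := by
      intro y' hy' x₁ hx₁ x₂ hx₂ hle
      rcases eq_or_lt_of_le hle with rfl | hlt
      · exact le_refl _
      -- the function y'' ↦ log K x₂ y'' - log K x₁ y'' is monotone on Ioo c d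
      have hmono : MonotoneOn (fun y'' => Real.log (K x₂ y'') - Real.log (K x₁ y''))
          (Ioo c d) := by
        intro y₁ hy₁ y₂ hy₂ hle'
        rcases eq_or_lt_of_le hle' with rfl | hlt'
        · exact le_refl _
        have h := hTP x₁ hx₁ x₂ hx₂ y₁ hy₁ y₂ hy₂ hlt hlt'
        have h1 := hKpos x₁ hx₁ y₁ hy₁
        have h2 := hKpos x₁ hx₁ y₂ hy₂
        have h3 := hKpos x₂ hx₂ y₁ hy₁
        have h4 := hKpos x₂ hx₂ y₂ hy₂
        have hlog : Real.log (K x₁ y₂ * K x₂ y₁) ≤ Real.log (K x₁ y₁ * K x₂ y₂) :=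
          Real.log_le_log (by positivity) h
        rw [Real.log_mul h2.ne' h3.ne', Real.log_mul h1.ne' h4.ne'] at hlog
        show Real.log (K x₂ y₁) - Real.log (K x₁ y₁) ≤
          Real.log (K x₂ y₂) - Real.log (K x₁ y₂)
        linarith
      have hderiv : HasDerivAt (fun y'' => Real.log (K x₂ y'') - Real.log (K x₁ y''))
          (L x₂ y' - L x₁ y') y' := (hL x₂ hx₂ y' hy').sub (hL x₁ hx₁ y' hy')
      have := aux_deriv_nonneg hy' hderiv hmono
      linarith
    exact aux_deriv_nonneg hx (hγ x hx y hy) (hLmono y hy)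
  · intro hγpos x₁ hx₁ x₂ hx₂ y₁ hy₁ y₂ hy₂ hx hy
    have hLle : ∀ y ∈ Ioo c d, L x₁ y ≤ L x₂ y := by
      intro y hy
      have := aux_mono (f := fun x' => L x' y) (f' := fun x' => γ x' y)
        (fun x hx => hγ x hx y hy) (fun x hx => hγpos x hx y hy)
      exact this hx₁ hx₂ hx.le
    have hmono : MonotoneOn (fun y' => Real.log (K x₂ y') - Real.log (K x₁ y'))
        (Ioo c d) := by
      apply aux_mono (f' := fun y' => L x₂ y' - L x₁ y')
      · exact fun y hy => (hL x₂ hx₂ y hy).sub (hL x₁ hx₁ y hy)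
      · exact fun y hy => sub_nonneg.mpr (hLle y hy)
    have h := hmono hy₁ hy₂ hy.le
    have h1 := hKpos x₁ hx₁ y₁ hy₁
    have h2 := hKpos x₁ hx₁ y₂ hy₂
    have h3 := hKpos x₂ hx₂ y₁ hy₁
    have h4 := hKpos x₂ hx₂ y₂ hy₂
    rw [← Real.log_le_log_iff (by positivity) (by positivity),
      Real.log_mul h2.ne' h3.ne', Real.log_mul h1.ne' h4.ne']
    simp only at h
    linarith
end

section
/- Let λ₁, λ₂, λ₁₂ > 0. Then the Marshall–Olkin survival function H̄(x,y) = exp(−λ₁x − λ₂y − λ₁₂·max{x,y}) is TP_∞ on [0,∞)×[0,∞), i.e., for every integer s ≥ 2 and all 0 ≤ x₁ < ⋯ < x_s and 0 ≤ y₁ < ⋯ < y_s, the determinant of the s×s matrix with entries H̄(x_i, y_j) is nonnegative. -/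
open Real Set

/-- `K` is totally positive of all orders (TP_∞) on `S × T`. -/
def TPinf (K : ℝ → ℝ → ℝ) (S T : Set ℝ) : Prop :=
  ∀ s : ℕ, 2 ≤ s → ∀ x y : Fin s → ℝ, StrictMono x → StrictMono y →
    (∀ i, x i ∈ S) → (∀ i, y i ∈ T) →
      0 ≤ (Matrix.of fun i j => K (x i) (y j)).det


lemma min_sub_min (x p q : ℝ) (hpq : p ≤ q) :
    min x q - min x p = min (max (x - p) 0) (q - p) := by
  simp only [min_def, max_def]
  split_ifs <;> linarith

lemma min_det_aux (n : ℕ)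
    (ih : ∀ a b : Fin n → ℝ, Monotone a → Monotone b → (∀ i, 0 ≤ a i) → (∀ j, 0 ≤ b j) →
      0 ≤ (Matrix.of fun i j => min (a i) (b j)).det)
    (a b : Fin (n + 1) → ℝ) (ha : Monotone a) (hb : Monotone b)
    (ha0 : ∀ i, 0 ≤ a i) (hb0 : ∀ j, 0 ≤ b j) (hab : a 0 ≤ b 0) :
    0 ≤ (Matrix.of fun i j => min (a i) (b j)).det := by
  set c := a 0 with hc
  have hbc : ∀ j, c ≤ b j := fun j => hab.trans (hb (Fin.zero_le j))
  have hrow0 : ∀ j, min (a 0) (b j) = c := fun j => min_eq_left (hbc j)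
  -- B1 : subtract row 0 from all other rows
  set B1 : Matrix (Fin (n + 1)) (Fin (n + 1)) ℝ :=
    Matrix.of (fun i j => if i = 0 then c else min (a i) (b j) - c) with hB1
  have h1 : (Matrix.of fun i j => min (a i) (b j)).det = B1.det := by
    apply Matrix.det_eq_of_forall_row_eq_smul_add_const
      (fun i => if i = 0 then 0 else 1) 0 (by simp)
    intro i j
    by_cases hi : i = 0 <;> simp [hB1, hi, hrow0]
  -- B2 : subtract column 0 from all other columns
  set B2 : Matrix (Fin (n + 1)) (Fin (n + 1)) ℝ :=
    Matrix.of (fun i j =>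
      if j = 0 then B1 i 0
      else if i = 0 then 0 else min (a i) (b j) - min (a i) (b 0)) with hB2
  have h2 : B1.det = B2.det := by
    rw [← Matrix.det_transpose B1, ← Matrix.det_transpose B2]
    apply Matrix.det_eq_of_forall_row_eq_smul_add_const
      (fun j => if j = 0 then 0 else 1) 0 (by simp)
    intro i j
    by_cases hi : i = 0
    · simp [hB2, hi]
    · by_cases hj : j = 0 <;> simp [hB1, hB2, hi, hj] <;> ring
  rw [h1, h2, Matrix.det_succ_row_zero]
  have hzero : ∀ j : Fin (n + 1), j ≠ 0 → B2 0 j = 0 := by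
    intro j hj; simp [hB2, hB1, hj]
  rw [Finset.sum_eq_single 0]
  · have hB200 : B2 0 0 = c := by simp [hB2, hB1]
    rw [hB200]
    simp only [Fin.val_zero, pow_zero, one_mul, Fin.succAbove_zero]
    apply mul_nonneg (ha0 0)
    have hsub : (B2.submatrix Fin.succ Fin.succ) =
        Matrix.of (fun i j : Fin n => min (max (a i.succ - b 0) 0) (b j.succ - b 0)) := by
      ext i j
      have h0 : b 0 ≤ b j.succ := hb (Fin.zero_le _)
      simp only [Matrix.submatrix_apply, hB2, Matrix.of_apply,
        if_neg (Fin.succ_ne_zero j), if_neg (Fin.succ_ne_zero i)]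
      rw [min_sub_min _ _ _ h0]
    rw [hsub]
    apply ih
    · intro i j hij
      exact max_le_max (by have := ha (Fin.succ_le_succ_iff.mpr hij); linarith) le_rfl
    · intro i j hij
      dsimp only
      have := hb (Fin.succ_le_succ_iff.mpr hij); linarith
    · intro i; exact le_max_right _ _
    · intro j; have := hb (Fin.zero_le j.succ); linarith
  · intro j _ hj
    rw [hzero j hj]; ring
  · intro h; exact absurd (Finset.mem_univ _) h

lemma min_det_nonneg : ∀ (n : ℕ) (a b : Fin n → ℝ), Monotone a → Monotone b →
    (∀ i, 0 ≤ a i) → (∀ j, 0 ≤ b j) →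
    0 ≤ (Matrix.of fun i j => min (a i) (b j)).det := by
  intro n
  induction n with
  | zero => intro a b _ _ _ _; simp [Matrix.det_fin_zero]
  | succ n ih =>
    intro a b ha hb ha0 hb0
    rcases le_total (a 0) (b 0) with h | h
    · exact min_det_aux n ih a b ha hb ha0 hb0 h
    · have hflip : (Matrix.of fun i j => min (a i) (b j)).det =
          (Matrix.of fun i j => min (b i) (a j)).det := by
        rw [← Matrix.det_transpose]
        congr 1
        ext i j
        simp [min_comm]
      rw [hflip]
      exact min_det_aux n ih b a hb ha hb0 ha0 h

theorem marshall_olkin_survival_tp_inf (l₁ l₂ l₁₂ : ℝ)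
    (h₁ : 0 < l₁) (h₂ : 0 < l₂) (h₁₂ : 0 < l₁₂) :
    TPinf (fun x y => Real.exp (-(l₁ * x + l₂ * y + l₁₂ * max x y)))
      (Ici 0) (Ici 0) := by
  intro s _ x y hx hy _ _
  set d₁ : Fin s → ℝ := fun i => Real.exp (-(l₁ * x i)) with hd₁
  set d₂ : Fin s → ℝ := fun j => Real.exp (-(l₂ * y j)) with hd₂
  set a : Fin s → ℝ := fun i => Real.exp (-(l₁₂ * x i)) with haa
  set b : Fin s → ℝ := fun j => Real.exp (-(l₁₂ * y j)) with hbb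
  have hmin : ∀ i j, min (a i) (b j) = Real.exp (-(l₁₂ * max (x i) (y j))) := by
    intro i j
    rcases le_total (x i) (y j) with h | h
    · rw [max_eq_right h, hbb]
      exact min_eq_right (Real.exp_le_exp.2 (by nlinarith))
    · rw [max_eq_left h, haa]
      exact min_eq_left (Real.exp_le_exp.2 (by nlinarith))
  have hM : (Matrix.of fun i j => Real.exp (-(l₁ * x i + l₂ * y j + l₁₂ * max (x i) (y j)))) =
      Matrix.diagonal d₁ * Matrix.of (fun i j => min (a i) (b j)) * Matrix.diagonal d₂ := by
    ext i j
    rw [Matrix.mul_diagonal, Matrix.diagonal_mul]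
    show Real.exp (-(l₁ * x i + l₂ * y j + l₁₂ * max (x i) (y j)))
        = d₁ i * min (a i) (b j) * d₂ j
    rw [hmin i j, hd₁, hd₂,
      show -(l₁ * x i + l₂ * y j + l₁₂ * max (x i) (y j))
        = -(l₁ * x i) + -(l₁₂ * max (x i) (y j)) + -(l₂ * y j) by ring,
      Real.exp_add, Real.exp_add]
  show 0 ≤ (Matrix.of fun i j =>
      Real.exp (-(l₁ * x i + l₂ * y j + l₁₂ * max (x i) (y j)))).det
  rw [hM, Matrix.det_mul, Matrix.det_mul, Matrix.det_diagonal, Matrix.det_diagonal]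
  have hK : 0 ≤ (Matrix.of fun i j => min (a i) (b j)).det := by
    rw [← Matrix.det_submatrix_equiv_self Fin.revPerm]
    have : ((Matrix.of fun i j => min (a i) (b j)).submatrix Fin.revPerm Fin.revPerm) =
        Matrix.of (fun i j => min ((a ∘ Fin.rev) i) ((b ∘ Fin.rev) j)) := rfl
    rw [this]
    apply min_det_nonneg
    · intro i j hij
      exact Real.exp_le_exp.2 (by
        have := hx.monotone (Fin.rev_le_rev.mpr hij)
        nlinarith)
    · intro i j hij
      exact Real.exp_le_exp.2 (by
        have := hy.monotone (Fin.rev_le_rev.mpr hij)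
        nlinarith)
    · intro i; exact (Real.exp_pos _).le
    · intro j; exact (Real.exp_pos _).le
  apply mul_nonneg (mul_nonneg _ hK) _ <;>
    exact Finset.prod_nonneg fun _ _ => (Real.exp_pos _).le
end

section
/- Let α, β ∈ (0,1). Then the Marshall–Olkin survival copula Ĉ(u,v) = min{ u·v^{1−β}, u^{1−α}·v } is TP_∞ on (0,1)×(0,1), i.e., for every integer s ≥ 2 and all 0 < u₁ < ⋯ < u_s < 1 and 0 < v₁ < ⋯ < v_s < 1, the determinant of the s×s matrix with entries Ĉ(u_i, v_j) is nonnegative. -/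
open Real Set

/-- Determinant of the min-kernel matrix is nonnegative for monotone nonneg vectors. -/
lemma min_kernel_det_nonneg : ∀ (n : ℕ) (x y : Fin n → ℝ), Monotone x → Monotone y →
    (∀ i, 0 ≤ x i) → (∀ i, 0 ≤ y i) →
    0 ≤ (Matrix.of fun i j => min (x i) (y j)).det := by
  intro n
  induction n with
  | zero => intro x y _ _ _ _; simp [Matrix.det_fin_zero]
  | succ n ih =>
    have key : ∀ (x y : Fin (n+1) → ℝ), Monotone x → Monotone y →
        (∀ i, 0 ≤ x i) → (∀ i, 0 ≤ y i) → y 0 ≤ x 0 →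
        0 ≤ (Matrix.of fun i j => min (x i) (y j)).det := by
      intro x y hx hy hx0 hy0 hyx
      set M : Matrix (Fin (n+1)) (Fin (n+1)) ℝ := Matrix.of fun i j => min (x i) (y j) with hM
      set B : Matrix (Fin (n+1)) (Fin (n+1)) ℝ :=
        Matrix.of fun i j => M i j + (if i = 0 then 0 else (-1)) * M 0 j with hB
      have hdet : B.det = M.det :=
        Matrix.det_eq_of_forall_row_eq_smul_add_const (fun i => if i = 0 then 0 else -1) 0
          (by simp) (fun i j => rfl)
      have hB0 : ∀ i, B i 0 = if i = 0 then y 0 else 0 := by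
        intro i
        have h1 : min (x i) (y 0) = y 0 :=
          min_eq_right ((hyx.trans (hx (Fin.zero_le i))))
        have h2 : min (x 0) (y 0) = y 0 := min_eq_right hyx
        by_cases hi : i = 0 <;> simp [hB, hM, hi, Matrix.of_apply, h1, h2]
      rw [← hdet, Matrix.det_succ_column_zero]
      rw [Finset.sum_eq_single 0]
      · have hsub : (B.submatrix (Fin.succAbove 0) Fin.succ) =
            Matrix.of fun i j => min (x i.succ - x 0) (max (y j.succ - x 0) 0) := by
          ext i j
          simp only [Matrix.submatrix_apply, Fin.succAbove_zero, hB, hM, Matrix.of_apply]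
          have hi0 : (i.succ : Fin (n+1)) ≠ 0 := Fin.succ_ne_zero i
          simp only [hi0, if_false]
          have hx0i : x 0 ≤ x i.succ := hx (Fin.zero_le _)
          rcases le_total (y j.succ) (x 0) with h | h
          · have e1 : min (x i.succ) (y j.succ) = y j.succ :=
              min_eq_right (h.trans hx0i)
            have e2 : min (x 0) (y j.succ) = y j.succ := min_eq_right h
            rw [e1, e2]
            rw [max_eq_right (by linarith)]
            rw [min_eq_right (by linarith)]
            ring
          · have e2 : min (x 0) (y j.succ) = x 0 := min_eq_left h
            rw [e2, max_eq_left (by linarith)]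
            rcases le_total (x i.succ) (y j.succ) with h2 | h2
            · rw [min_eq_left h2, min_eq_left (by linarith)]; ring
            · rw [min_eq_right h2, min_eq_right (by linarith)]; ring
        have hih : 0 ≤ (B.submatrix (Fin.succAbove 0) Fin.succ).det := by
          rw [hsub]
          apply ih
          · intro i j hij
            have := hx (Fin.strictMono_succ.monotone hij)
            simpa using sub_le_sub_right this (x 0)
          · intro i j hij
            exact max_le_max (sub_le_sub_right (hy (Fin.strictMono_succ.monotone hij)) _) le_rfl
          · intro i
            have := hx (Fin.zero_le i.succ)
            linarith
          · intro i; exact le_max_right _ _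
        rw [hB0 0]
        simp only [if_true, Fin.val_zero, pow_zero, one_mul, reduceIte]
        exact mul_nonneg (hy0 0) hih
      · intro i _ hi
        rw [hB0 i]
        simp [hi]
      · simp
    intro x y hx hy hx0 hy0
    rcases le_total (y 0) (x 0) with h | h
    · exact key x y hx hy hx0 hy0 h
    · have := key y x hy hx hy0 hx0 h
      calc (0:ℝ) ≤ (Matrix.of fun i j => min (y i) (x j)).det := this
        _ = (Matrix.of fun i j => min (x i) (y j)).det := by
            rw [← Matrix.det_transpose]
            congr 1
            ext i j
            simp [Matrix.transpose_apply, min_comm]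

theorem marshall_olkin_survival_copula_tp_inf (α β : ℝ)
    (hα0 : 0 < α) (hα1 : α < 1) (hβ0 : 0 < β) (hβ1 : β < 1) :
    TPinf (fun u v => min (u * v ^ (1 - β)) (u ^ (1 - α) * v))
      (Ioo 0 1) (Ioo 0 1) := by
  intro s _ x y hx hy hxS hyS
  have hx0 : ∀ i, 0 < x i := fun i => (hxS i).1
  have hy0 : ∀ i, 0 < y i := fun i => (hyS i).1
  -- pointwise factorization
  have hfac : ∀ i j, min (x i * y j ^ (1 - β)) ((x i) ^ (1 - α) * y j) =
      x i * (y j * min ((x i) ^ (-α)) ((y j) ^ (-β))) := by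
    intro i j
    have hu := hx0 i
    have hv := hy0 j
    have e1 : (y j) ^ (1 - β) = y j * (y j) ^ (-β) := by
      rw [sub_eq_add_neg, Real.rpow_add hv, Real.rpow_one]
    have e2 : (x i) ^ (1 - α) = x i * (x i) ^ (-α) := by
      rw [sub_eq_add_neg, Real.rpow_add hu, Real.rpow_one]
    rw [e1, e2, min_comm ((x i) ^ (-α)) _, mul_min_of_nonneg _ _ (le_of_lt hv),
      mul_min_of_nonneg _ _ (le_of_lt hu)]
    ring_nf
  have hrw : (Matrix.of fun i j =>
      (fun u v => min (u * v ^ (1 - β)) (u ^ (1 - α) * v)) (x i) (y j)) =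
      Matrix.of fun i j => x i *
        ((Matrix.of fun i j => y j * (Matrix.of fun i j =>
          min ((x i) ^ (-α)) ((y j) ^ (-β))) i j) i j) := by
    ext i j
    simpa using hfac i j
  rw [hrw, Matrix.det_mul_column, Matrix.det_mul_row]
  set m : Matrix (Fin s) (Fin s) ℝ :=
    Matrix.of fun i j => min ((x i) ^ (-α)) ((y j) ^ (-β)) with hm
  have hmdet : 0 ≤ m.det := by
    rw [← Matrix.det_submatrix_equiv_self Fin.revPerm m]
    have : (m.submatrix Fin.revPerm Fin.revPerm) =
        Matrix.of fun i j => min ((x (Fin.rev i)) ^ (-α)) ((y (Fin.rev j)) ^ (-β)) := by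
      ext i j; rfl
    rw [this]
    apply min_kernel_det_nonneg
    · intro i j hij
      exact Real.rpow_le_rpow_of_nonpos (hx0 _)
        (hx.monotone (Fin.rev_le_rev.mpr hij)) (by linarith)
    · intro i j hij
      exact Real.rpow_le_rpow_of_nonpos (hy0 _)
        (hy.monotone (Fin.rev_le_rev.mpr hij)) (by linarith)
    · intro i; exact Real.rpow_nonneg (le_of_lt (hx0 _)) _
    · intro i; exact Real.rpow_nonneg (le_of_lt (hy0 _)) _
  have hpx : 0 ≤ ∏ i, x i := Finset.prod_nonneg fun i _ => (hx0 i).le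
  have hpy : 0 ≤ ∏ i, y i := Finset.prod_nonneg fun i _ => (hy0 i).le
  positivity
end

section
/- Let r ≥ 2 be an integer and let h : ℝ² → [0,∞) be an integrable function with ∫∫_{ℝ²} h(x,y) dx dy = 1 which is TP_r on ℝ×ℝ. Then both the distribution function H(x,y) = ∫_{−∞}^{x}∫_{−∞}^{y} h(u,v) dv du and the survival function H̄(x,y) = ∫_{x}^{∞}∫_{y}^{∞} h(u,v) dv du are TP_r on ℝ×ℝ. In particular, if h is TP_∞ then H and H̄ are TP_∞. -/
open Real Set MeasureTheory

/-- `K` is totally positive of order `r` on `S × T`. -/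
def TPr (r : ℕ) (K : ℝ → ℝ → ℝ) (S T : Set ℝ) : Prop :=
  ∀ s : ℕ, 2 ≤ s → s ≤ r → ∀ x y : Fin s → ℝ, StrictMono x → StrictMono y →
    (∀ i, x i ∈ S) → (∀ i, y i ∈ T) →
      0 ≤ (Matrix.of fun i j => K (x i) (y j)).det

/-! The distribution and survival functions are compositions `K ∘ h ∘ Kᵀ` of the density with the
kernel `K(x, u) = 1[u ≤ x]` (resp. `1[x < u]`), which is totally positive of every order because
its rows are nested initial segments. Total positivity is preserved by composition, by the basic
composition formula
  `s! · det (∫ K(xᵢ, t) L(t, yⱼ) dt) = ∫ det (K(xᵢ, tⱼ)) · det (L(tᵢ, yⱼ)) dt`,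
whose integrand is nonnegative: sorting `t` multiplies both determinants by the same sign. -/

theorem Matrix.det_eq_sum_sign_mul_prod {n R : Type*} [Fintype n] [DecidableEq n] [CommRing R]
    (M : Matrix n n R) : M.det = ∑ σ : Equiv.Perm n, (Equiv.Perm.sign σ : R) * ∏ i, M i (σ i) := by
  rw [← Matrix.det_transpose, Matrix.det_apply']
  rfl

theorem Matrix.sum_perm_prod_mul_det_submatrix {n R : Type*} [Fintype n] [DecidableEq n]
    [CommRing R] (A B : Matrix n n R) :
    ∑ τ : Equiv.Perm n, (∏ i, A i (τ i)) * (B.submatrix τ id).det = A.det * B.det := by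
  simp only [Matrix.det_permute, A.det_eq_sum_sign_mul_prod, Finset.sum_mul]
  exact Finset.sum_congr rfl fun τ _ => by ring

theorem mul_indicator_one_eq_indicator {α M₀ : Type*} [MulZeroOneClass M₀] (F : α → M₀) (A : Set α)
    (v : α) : F v * A.indicator 1 v = A.indicator F v := by
  by_cases hv : v ∈ A <;> simp [hv]

theorem det_ite_lt_nonneg_of_monotone {s : ℕ} {k : Fin s → ℕ} (hk : Monotone k)
    (hks : ∀ i, k i ≤ s) :
    0 ≤ (Matrix.of fun i j : Fin s => if (j : ℕ) < k i then (1 : ℝ) else 0).det := by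
  set A := Matrix.of fun i j : Fin s => if (j : ℕ) < k i then (1 : ℝ) else 0
  by_cases hinj : Function.Injective k
  swap
  · obtain ⟨i, i', hki, hne⟩ := Function.not_injective_iff.1 hinj
    rw [Matrix.det_zero_of_row_eq hne (by ext j; simp [A, hki])]
  by_cases hzero : ∃ i, k i = 0
  · obtain ⟨i, hi⟩ := hzero
    rw [Matrix.det_eq_zero_of_row_eq_zero i (by simp [A, hi])]
  push Not at hzero
  -- `i ↦ k i - 1` is a strictly monotone self-map of `Fin s`, hence the identity
  have hdiag : ∀ i, k i = i + 1 := by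
    let e : Fin s → Fin s := fun i => ⟨k i - 1, by have := hks i; have := hzero i; omega⟩
    have he : StrictMono e := fun i i' hii' => by
      have := hk.strictMono_of_injective hinj hii'
      have := hzero i
      simp only [e, Fin.mk_lt_mk]
      omega
    intro i
    have hi := congrArg Fin.val (congrFun he.eq_id i)
    simp only [e, id] at hi
    have := hzero i
    omega
  have hA : A.IsLowerTriangular := fun i j hij => by
    have : (i : ℕ) < j := hij
    simp only [A, Matrix.of_apply, hdiag]
    exact if_neg (by omega)
  rw [Matrix.det_of_isLowerTriangular _ hA]
  simp [A, hdiag]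

theorem det_ite_nonneg_of_monotone_antitone {s : ℕ} (P : Fin s → Fin s → Prop) [DecidableRel P]
    (hP : ∀ ⦃i i' j j'⦄, i ≤ i' → j' ≤ j → P i j → P i' j') :
    0 ≤ (Matrix.of fun i j => if P i j then (1 : ℝ) else 0).det := by
  let k : Fin s → ℕ := fun i => (Finset.univ.filter (P i)).card
  have hPk : ∀ i j, P i j ↔ (j : ℕ) < k i := by
    intro i j
    constructor
    · intro hij
      calc (j : ℕ) < (Finset.Iic j).card := by simp
        _ ≤ k i := Finset.card_le_card fun j' hj' => by
          simp only [Finset.mem_Iic] at hj'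
          simpa using hP le_rfl hj' hij
    · intro hj
      by_contra hij
      have : k i ≤ (Finset.Iio j).card := Finset.card_le_card fun j' hj' => by
        simp only [Finset.mem_filter, Finset.mem_univ, true_and] at hj'
        simpa using lt_of_not_ge fun hjj' => hij (hP le_rfl hjj' hj')
      rw [Fin.card_Iio] at this
      omega
  have hk : Monotone k := fun i i' hii' => Finset.card_le_card fun j hj => by
    simp only [Finset.mem_filter, Finset.mem_univ, true_and] at hj ⊢
    exact hP hii' le_rfl hj
  simpa only [hPk] using
    det_ite_lt_nonneg_of_monotone hk fun i => (Finset.card_filter_le _ _).trans (by simp)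

theorem det_mul_det_nonneg_of_strictMono {α : Type*} [LinearOrder α] {s : ℕ}
    {f : Fin s → α → ℝ} {g : α → Fin s → ℝ} {G : Set α}
    (hf : ∀ t : Fin s → α, StrictMono t → (∀ i, t i ∈ G) →
      0 ≤ (Matrix.of fun i j => f i (t j)).det)
    (hg : ∀ t : Fin s → α, StrictMono t → (∀ i, t i ∈ G) →
      0 ≤ (Matrix.of fun i j => g (t i) j).det)
    {t : Fin s → α} (ht : ∀ i, t i ∈ G) :
    0 ≤ (Matrix.of fun i j => f i (t j)).det * (Matrix.of fun i j => g (t i) j).det := by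
  by_cases hinj : Function.Injective t
  swap
  · obtain ⟨i, i', hti, hne⟩ := Function.not_injective_iff.1 hinj
    rw [Matrix.det_zero_of_row_eq (M := Matrix.of fun i j => g (t i) j) hne (by ext j; simp [hti]),
      mul_zero]
  set σ := Tuple.sort t
  have hσ : StrictMono (t ∘ σ) :=
    (Tuple.monotone_sort t).strictMono_of_injective (hinj.comp σ.injective)
  have hsort : (Matrix.of fun i j => f i (t j)).det * (Matrix.of fun i j => g (t i) j).det =
      (Matrix.of fun i j => f i ((t ∘ σ) j)).det * (Matrix.of fun i j => g ((t ∘ σ) i) j).det := by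
    rw [← Matrix.det_mul, ← Matrix.det_mul]
    exact congrArg Matrix.det (Matrix.submatrix_mul_equiv _ _ id σ id).symm
  rw [hsort]
  exact mul_nonneg (hf _ hσ fun i => ht _) (hg _ hσ fun i => ht _)

theorem MeasurableEquiv.coe_piCongrLeft_perm_symm {ι α : Type*} [MeasurableSpace α]
    (τ : Equiv.Perm ι) : ⇑(MeasurableEquiv.piCongrLeft (fun _ => α) τ.symm) = fun t => t ∘ τ := by
  ext t i
  simp [MeasurableEquiv.coe_piCongrLeft, Equiv.piCongrLeft_apply_eq_cast]

section Composition

variable {ι α : Type*} [Fintype ι] [MeasurableSpace α] {μ : Measure α} [SigmaFinite μ]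

theorem integral_comp_perm (τ : Equiv.Perm ι) (F : (ι → α) → ℝ) :
    ∫ t, F (t ∘ τ) ∂(Measure.pi fun _ => μ) = ∫ t, F t ∂(Measure.pi fun _ => μ) := by
  have := (measurePreserving_piCongrLeft (fun _ => μ) τ.symm).integral_comp' F
  rwa [MeasurableEquiv.coe_piCongrLeft_perm_symm] at this

theorem MeasureTheory.Integrable.comp_perm {F : (ι → α) → ℝ}
    (hF : Integrable F (Measure.pi fun _ => μ)) (τ : Equiv.Perm ι) :
    Integrable (fun t => F (t ∘ τ)) (Measure.pi fun _ => μ) := by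
  have := (measurePreserving_piCongrLeft (fun _ => μ) τ.symm).integrable_comp_of_integrable hF
  rwa [MeasurableEquiv.coe_piCongrLeft_perm_symm] at this

variable [DecidableEq ι] {f : ι → α → ℝ} {g : α → ι → ℝ}

theorem integral_det_mul_det (hfg : ∀ i j, Integrable (fun t => f i t * g t j) μ) :
    ∫ t, (Matrix.of fun i j => f i (t j)).det * (Matrix.of fun i j => g (t i) j).det
        ∂(Measure.pi fun _ => μ) =
      (Fintype.card ι).factorial * (Matrix.of fun i j => ∫ t, f i t * g t j ∂μ).det := by
  let F : (ι → α) → ℝ := fun t => (∏ i, f i (t i)) * (Matrix.of fun i j => g (t i) j).det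
  have hF : F = fun t => ∑ σ : Equiv.Perm ι,
      (Equiv.Perm.sign σ : ℝ) * ∏ i, f i (t i) * g (t i) (σ i) := by
    ext t
    simp only [F, Matrix.det_eq_sum_sign_mul_prod, Finset.mul_sum, Finset.prod_mul_distrib,
      Matrix.of_apply]
    exact Finset.sum_congr rfl fun σ _ => by ring
  have hF_int : Integrable F (Measure.pi fun _ => μ) := by
    rw [hF]
    exact integrable_finsetSum _ fun σ _ =>
      (Integrable.fintype_prod fun i => hfg i (σ i)).const_mul _
  have hF_integral : ∫ t, F t ∂(Measure.pi fun _ => μ) =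
      (Matrix.of fun i j => ∫ t, f i t * g t j ∂μ).det := by
    rw [hF, integral_finsetSum _ fun σ _ =>
      (Integrable.fintype_prod fun i => hfg i (σ i)).const_mul _, Matrix.det_eq_sum_sign_mul_prod]
    refine Finset.sum_congr rfl fun σ _ => ?_
    rw [integral_const_mul, integral_fintype_prod_eq_prod (fun i t => f i t * g t (σ i))]
    rfl
  have hF_sym : ∀ t, ∑ τ : Equiv.Perm ι, F (t ∘ τ) =
      (Matrix.of fun i j => f i (t j)).det * (Matrix.of fun i j => g (t i) j).det := fun t =>
    Matrix.sum_perm_prod_mul_det_submatrix (Matrix.of fun i j => f i (t j))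
      (Matrix.of fun i j => g (t i) j)
  calc ∫ t, (Matrix.of fun i j => f i (t j)).det * (Matrix.of fun i j => g (t i) j).det
        ∂(Measure.pi fun _ => μ)
      = ∑ τ : Equiv.Perm ι, ∫ t, F (t ∘ τ) ∂(Measure.pi fun _ => μ) := by
        simp_rw [← hF_sym]
        exact integral_finsetSum _ fun τ _ => hF_int.comp_perm τ
    _ = (Fintype.card ι).factorial * (Matrix.of fun i j => ∫ t, f i t * g t j ∂μ).det := by
        simp [integral_comp_perm, hF_integral, Fintype.card_perm]

theorem det_integral_mul_nonneg (hfg : ∀ i j, Integrable (fun t => f i t * g t j) μ)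
    (hpos : ∀ᵐ t ∂(Measure.pi fun _ => μ),
      0 ≤ (Matrix.of fun i j => f i (t j)).det * (Matrix.of fun i j => g (t i) j).det) :
    0 ≤ (Matrix.of fun i j => ∫ t, f i t * g t j ∂μ).det := by
  have h := integral_nonneg_of_ae hpos
  rw [integral_det_mul_det hfg] at h
  exact nonneg_of_mul_nonneg_right h (by positivity)

end Composition

theorem TPr.mono {r : ℕ} {K : ℝ → ℝ → ℝ} {S S' T T' : Set ℝ} (hK : TPr r K S T) (hS : S' ⊆ S)
    (hT : T' ⊆ T) : TPr r K S' T' :=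
  fun s hs hsr x y hx hy hxS hyT => hK s hs hsr x y hx hy (fun i => hS (hxS i)) fun i => hT (hyT i)

theorem TPr.flip {r : ℕ} {K : ℝ → ℝ → ℝ} {S T : Set ℝ} (hK : TPr r K S T) :
    TPr r (fun y x => K x y) T S := by
  intro s hs hsr y x hy hx hyT hxS
  rw [← Matrix.det_transpose]
  exact hK s hs hsr x y hx hy hxS hyT

theorem TPr.integral_mul {r : ℕ} {K L : ℝ → ℝ → ℝ} {S G T : Set ℝ} (hK : TPr r K S G)
    (hL : TPr r L G T) (hG : ∀ᵐ t, t ∈ G)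
    (hKL : ∀ x ∈ S, ∀ y ∈ T, Integrable fun t => K x t * L t y) :
    TPr r (fun x y => ∫ t, K x t * L t y) S T := by
  intro s hs hsr x y hx hy hxS hyT
  refine det_integral_mul_nonneg (fun i j => hKL _ (hxS i) _ (hyT j)) ?_
  have hGs : ∀ᵐ t ∂(Measure.pi fun _ : Fin s => volume), ∀ i, t i ∈ G :=
    Filter.eventually_all.2 fun i => Measure.tendsto_eval_ae_ae.eventually hG
  filter_upwards [hGs] with t ht
  exact det_mul_det_nonneg_of_strictMono (g := fun t j => L t (y j))
    (fun t' ht' htG => hK s hs hsr x t' hx ht' hxS htG)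
    (fun t' ht' htG => hL s hs hsr t' y ht' hy htG hyT) ht

theorem tpr_indicator_Iic (r : ℕ) : TPr r (fun x u => (Iic x).indicator 1 u) univ univ := by
  intro s _ _ x u hx hu _ _
  simpa [indicator_apply] using
    det_ite_nonneg_of_monotone_antitone (fun i j => u j ≤ x i)
      fun i i' j j' hii' hjj' hij => (hu.monotone hjj').trans (hij.trans (hx.monotone hii'))

theorem tpr_indicator_Ioi (r : ℕ) : TPr r (fun x u => (Ioi x).indicator 1 u) univ univ := by
  intro s _ _ x u hx hu _ _
  rw [← Matrix.det_submatrix_equiv_self Fin.revPerm]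
  convert det_ite_nonneg_of_monotone_antitone (fun i j => x (Fin.rev i) < u (Fin.rev j))
    fun i i' j j' hii' hjj' hij =>
      (hx.monotone (Fin.rev_le_rev.2 hii')).trans_lt
        (hij.trans_le (hu.monotone (Fin.rev_le_rev.2 hjj')))
  ext i j
  simp [indicator_apply]

theorem TPr.setIntegral_setIntegral {r : ℕ} {h : ℝ → ℝ → ℝ}
    (hint : Integrable fun p : ℝ × ℝ => h p.1 p.2) (hTP : TPr r h univ univ) {I : ℝ → Set ℝ}
    (hI : ∀ a, MeasurableSet (I a)) (hI_TP : TPr r (fun x u => (I x).indicator 1 u) univ univ) :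
    TPr r (fun x y => ∫ u in I x, ∫ v in I y, h u v) univ univ := by
  -- off `G` the inner integrals may be junk values, so the inner kernel is only TP on `G × ℝ`;
  -- the complement of `G` is null, which is all the outer composition needs
  let G := {u | Integrable (h u)}
  have hG : ∀ᵐ u, u ∈ G := hint.prod_right_ae
  have hinner : TPr r (fun u y => ∫ v, h u v * (I y).indicator 1 v) G univ :=
    (hTP.mono (subset_univ G) subset_rfl).integral_mul hI_TP.flip (ae_of_all _ fun _ => trivial)
      fun u hu y _ => by simpa only [mul_indicator_one_eq_indicator] using hu.indicator (hI y)
  have houter := (hI_TP.mono subset_rfl (subset_univ G)).integral_mul hinner hG fun x _ y _ => by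
    have hxy := (hint.indicator ((hI x).prod (hI y))).integral_prod_left
    refine hxy.congr (ae_of_all _ fun u => ?_)
    simp only [← integral_const_mul]
    congr 1 with v
    rw [← mul_indicator_one_eq_indicator, Set.indicator_prod_one]
    ring
  convert houter using 3 with x y
  simp only [mul_indicator_one_eq_indicator, integral_indicator (hI _)]
  rw [← integral_indicator (hI x)]
  congr 1 with u
  rw [mul_comm]
  exact (mul_indicator_one_eq_indicator (fun u => ∫ v in I y, h u v) _ _).symm

theorem tp_r_density_implies_tp_r_cdf_and_survival_general (r : ℕ)
    (h : ℝ → ℝ → ℝ)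
    (hint : Integrable (fun p : ℝ × ℝ => h p.1 p.2))
    (hTP : TPr r h univ univ) :
    TPr r (fun x y => ∫ u in Iic x, ∫ v in Iic y, h u v) univ univ ∧
      TPr r (fun x y => ∫ u in Ioi x, ∫ v in Ioi y, h u v) univ univ :=
  ⟨hTP.setIntegral_setIntegral hint (fun _ => measurableSet_Iic) (tpr_indicator_Iic r),
    hTP.setIntegral_setIntegral hint (fun _ => measurableSet_Ioi) (tpr_indicator_Ioi r)⟩

theorem tp_r_density_implies_tp_r_cdf_and_survival (r : ℕ) (hr : 2 ≤ r)
    (h : ℝ → ℝ → ℝ) (hnn : ∀ x y : ℝ, 0 ≤ h x y)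
    (hint : Integrable (fun p : ℝ × ℝ => h p.1 p.2))
    (hone : ∫ p : ℝ × ℝ, h p.1 p.2 = 1)
    (hTP : TPr r h univ univ) :
    TPr r (fun x y => ∫ u in Iic x, ∫ v in Iic y, h u v) univ univ ∧
      TPr r (fun x y => ∫ u in Ioi x, ∫ v in Ioi y, h u v) univ univ :=
  tp_r_density_implies_tp_r_cdf_and_survival_general r h hint hTP
end
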